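/- arXiv:2108.03837 — 4 statements merged into one kernel-verified Lean document; each statement's English description precedes it below -/
import Mathlib

section
/- In the experts setting with finite action set A, for any transcript the swap regret satisfies R^T_swap ≤ |A| · max_{i,j∈A} Σ_{t : a^t = i} ( r^t_i − r^t_j ); consequently there exists an algorithm for the Learner guaranteeing, against any adaptive Adversary, E[R^T_swap] ≤ 4|A|·√(2T·ln|A|) (for T ≥ 2·ln|A|). -/
open scoped BigOperators

noncomputable section

/-- The prefix of a full transcript `a` before round `t`. -/
def transcriptPrefix {A : Type*} {T : ℕ} (a : Fin T → A) (t : Fin T) : Fin t.1 → A :=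
  fun s => a ⟨s.1, s.2.trans t.2⟩

/-- The prefix of a history `h` before its `s`-th entry. -/
def historyPrefix {A : Type*} {m : ℕ} (h : Fin m → A) (s : Fin m) : Fin s.1 → A :=
  fun u => h ⟨u.1, u.2.trans s.2⟩

/-- A learner's algorithm in the experts setting: at round `t` it maps the realized
history of its actions and the past loss vectors to a distribution over actions. -/
def ExpertStrategy (A : Type) (T : ℕ) : Type :=
  ∀ t : Fin T, (Fin t.1 → A) → (Fin t.1 → A → ℝ) → A → ℝ

/-- The per-round play induced by a strategy `σ` against the adaptive Adversary `r`. -/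
noncomputable def playOf {A : Type} {T : ℕ} (σ : ExpertStrategy A T)
    (r : ∀ t : Fin T, (Fin t.1 → A) → A → ℝ)
    (t : Fin T) (h : Fin t.1 → A) : A → ℝ :=
  σ t h (fun s => r ⟨s.1, s.2.trans t.2⟩ (historyPrefix h s))

/-- The probability of a full transcript `a` when the Learner plays the per-round
distributions `x`. -/
noncomputable def transcriptProb {A : Type} [Fintype A] {T : ℕ}
    (x : ∀ t : Fin T, (Fin t.1 → A) → A → ℝ) (a : Fin T → A) : ℝ :=
  ∏ t, x t (transcriptPrefix a t) (a t)


namespace SwapAux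
open Finset Filter Topology

variable {A : Type} [Fintype A] [Nonempty A]

/-! ### Hedge weights -/

noncomputable def hedgeW (η : ℝ) (L : A → ℝ) (j : A) : ℝ :=
  Real.exp (-(η * L j)) / ∑ k, Real.exp (-(η * L k))

lemma hedgeZ_pos (η : ℝ) (L : A → ℝ) : 0 < ∑ k, Real.exp (-(η * L k)) :=
  Finset.sum_pos (fun _ _ => Real.exp_pos _) Finset.univ_nonempty

lemma hedgeW_nonneg (η : ℝ) (L : A → ℝ) (j : A) : 0 ≤ hedgeW η L j :=
  div_nonneg (Real.exp_pos _).le (hedgeZ_pos η L).le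

lemma hedgeW_sum_one (η : ℝ) (L : A → ℝ) : ∑ j, hedgeW η L j = 1 := by
  unfold hedgeW
  rw [← Finset.sum_div, div_self (hedgeZ_pos η L).ne']

lemma exp_neg_le (z : ℝ) (hz : 0 ≤ z) : Real.exp (-z) ≤ 1 - z + z^2/2 := by
  have h1 : 1 + z + z^2/2 ≤ Real.exp z := by
    have := Real.sum_le_exp_of_nonneg hz 3
    simp [Finset.sum_range_succ, Nat.factorial] at this
    linarith
  have h2 : 0 < 1 + z + z^2/2 := by nlinarith
  rw [Real.exp_neg]
  have h4 : (Real.exp z)⁻¹ ≤ (1 + z + z^2/2)⁻¹ := inv_anti₀ h2 h1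
  refine h4.trans ?_
  rw [inv_le_iff_one_le_mul₀ h2]
  nlinarith

lemma hedge_step (η : ℝ) (hη : 0 ≤ η) (m : ℕ → A → ℝ)
    (hm : ∀ n j, m n j ∈ Set.Icc (0:ℝ) 1) (n : ℕ) :
    (∑ j, Real.exp (-(η * ∑ s ∈ range (n+1), m s j))) ≤
    (∑ j, Real.exp (-(η * ∑ s ∈ range n, m s j))) *
      Real.exp (-(η * ∑ k, hedgeW η (fun i => ∑ s ∈ range n, m s i) k * m n k) + η^2/2) := by
  set L : A → ℝ := fun i => ∑ s ∈ range n, m s i with hL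
  set Z : ℝ := ∑ j, Real.exp (-(η * L j)) with hZ
  have hZpos : 0 < Z := hedgeZ_pos η L
  set p : A → ℝ := hedgeW η L with hp
  have key : ∑ j, Real.exp (-(η * ∑ s ∈ range (n+1), m s j)) =
      Z * ∑ j, p j * Real.exp (-(η * m n j)) := by
    rw [Finset.mul_sum]
    congr 1; ext j
    have : ∑ s ∈ range (n+1), m s j = L j + m n j := by
      rw [Finset.sum_range_succ]
    rw [this, hp]
    unfold hedgeW
    rw [← hZ]
    have : Z * (Real.exp (-(η * L j)) / Z * Real.exp (-(η * m n j)))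
        = Real.exp (-(η * L j)) * Real.exp (-(η * m n j)) := by
      field_simp
    rw [this, ← Real.exp_add]
    ring_nf
  rw [key]
  have hsum1 : ∑ j, p j = 1 := hedgeW_sum_one η L
  have hbound : ∑ j, p j * Real.exp (-(η * m n j)) ≤
      Real.exp (-(η * ∑ k, p k * m n k) + η^2/2) := by
    have step1 : ∑ j, p j * Real.exp (-(η * m n j)) ≤
        ∑ j, p j * (1 - η * m n j + (η * m n j)^2/2) := by
      apply Finset.sum_le_sum
      intro j _
      exact mul_le_mul_of_nonneg_left
        (exp_neg_le _ (mul_nonneg hη (hm n j).1)) (hedgeW_nonneg η L j)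
    have step2 : ∑ j, p j * (1 - η * m n j + (η * m n j)^2/2) ≤
        1 - η * ∑ k, p k * m n k + η^2/2 := by
      have expand : ∑ j, p j * (1 - η * m n j + (η * m n j)^2/2) =
          (∑ j, p j) - η * (∑ j, p j * m n j) + ∑ j, p j * (η * m n j)^2/2 := by
        rw [Finset.mul_sum, ← Finset.sum_sub_distrib, ← Finset.sum_add_distrib]
        congr 1; ext j; ring
      rw [expand, hsum1]
      have : ∑ j, p j * (η * m n j)^2/2 ≤ η^2/2 := by
        calc ∑ j, p j * (η * m n j)^2/2 ≤ ∑ j, p j * (η^2/2) := by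
              apply Finset.sum_le_sum
              intro j _
              have h0 := (hm n j).1
              have h1 := (hm n j).2
              have hpj := hedgeW_nonneg η L j
              have hm2 : (m n j)^2 ≤ 1 := by nlinarith
              have : (η * m n j)^2/2 ≤ η^2/2 := by
                nlinarith [mul_le_mul_of_nonneg_left hm2 (sq_nonneg η)]
              nlinarith
          _ = η^2/2 := by rw [← Finset.sum_mul, hsum1, one_mul]
      linarith
    have step3 : 1 - η * ∑ k, p k * m n k + η^2/2 ≤
        Real.exp (-(η * ∑ k, p k * m n k) + η^2/2) := by
      have := Real.add_one_le_exp (-(η * ∑ k, p k * m n k) + η^2/2)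
      linarith
    exact step1.trans (step2.trans step3)
  exact mul_le_mul_of_nonneg_left hbound hZpos.le

lemma hedge_iter (η : ℝ) (hη : 0 ≤ η) (m : ℕ → A → ℝ)
    (hm : ∀ n j, m n j ∈ Set.Icc (0:ℝ) 1) (n : ℕ) :
    (∑ j, Real.exp (-(η * ∑ s ∈ range n, m s j))) ≤
      (Fintype.card A : ℝ) *
      Real.exp (-(η * ∑ s ∈ range n, ∑ k, hedgeW η (fun i => ∑ u ∈ range s, m u i) k * m s k)
        + n * η^2/2) := by
  induction n with
  | zero => simp [Finset.card_univ]
  | succ n ih =>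
    push_cast
    calc (∑ j, Real.exp (-(η * ∑ s ∈ range (n+1), m s j)))
        ≤ (∑ j, Real.exp (-(η * ∑ s ∈ range n, m s j))) *
          Real.exp (-(η * ∑ k, hedgeW η (fun i => ∑ s ∈ range n, m s i) k * m n k) + η^2/2) :=
          hedge_step η hη m hm n
      _ ≤ ((Fintype.card A : ℝ) *
          Real.exp (-(η * ∑ s ∈ range n, ∑ k, hedgeW η (fun i => ∑ u ∈ range s, m u i) k * m s k)
            + n * η^2/2)) *
          Real.exp (-(η * ∑ k, hedgeW η (fun i => ∑ s ∈ range n, m s i) k * m n k) + η^2/2) :=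
          mul_le_mul_of_nonneg_right ih (Real.exp_pos _).le
      _ = (Fintype.card A : ℝ) *
          Real.exp (-(η * ∑ s ∈ range (n+1), ∑ k, hedgeW η (fun i => ∑ u ∈ range s, m u i) k * m s k)
            + ((n:ℝ)+1) * η^2/2) := by
          rw [mul_assoc, ← Real.exp_add]
          congr 1
          congr 1
          rw [Finset.sum_range_succ]
          push_cast
          ring

lemma hedge_regret (η : ℝ) (hη : 0 < η) (T : ℕ) (m : ℕ → A → ℝ)
    (hm : ∀ n j, m n j ∈ Set.Icc (0:ℝ) 1) (j : A) :
    ∑ s ∈ range T, ∑ k, hedgeW η (fun i => ∑ u ∈ range s, m u i) k * m s k ≤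
      (∑ s ∈ range T, m s j) + Real.log (Fintype.card A) / η + η * T / 2 := by
  set G := ∑ s ∈ range T, ∑ k, hedgeW η (fun i => ∑ u ∈ range s, m u i) k * m s k with hG
  have h1 : Real.exp (-(η * ∑ s ∈ range T, m s j)) ≤
      (Fintype.card A : ℝ) * Real.exp (-(η * G) + T * η^2/2) := by
    refine le_trans ?_ (hedge_iter η hη.le m hm T)
    exact Finset.single_le_sum (f := fun k => Real.exp (-(η * ∑ s ∈ range T, m s k)))
      (fun k _ => (Real.exp_pos _).le) (Finset.mem_univ j)
  have hcard : (0:ℝ) < Fintype.card A := by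
    exact_mod_cast Fintype.card_pos
  have h2 := Real.log_le_log (Real.exp_pos _) h1
  rw [Real.log_exp, Real.log_mul hcard.ne' (Real.exp_pos _).ne', Real.log_exp] at h2
  have h3 : η * G ≤ η * ∑ s ∈ range T, m s j + Real.log (Fintype.card A) + T * η^2/2 := by
    linarith
  calc G = (η * G) / η := by field_simp
    _ ≤ (η * ∑ s ∈ range T, m s j + Real.log (Fintype.card A) + T * η^2/2) / η := by
        gcongr
    _ = (∑ s ∈ range T, m s j) + Real.log (Fintype.card A) / η + η * T / 2 := by
        field_simp

/-! ### Stationary distributions -/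

def IsStoch (Q : A → A → ℝ) : Prop :=
  (∀ i j, 0 ≤ Q i j) ∧ ∀ i, ∑ j, Q i j = 1

lemma exists_stationary (Q : A → A → ℝ) (hQ : IsStoch Q) :
    ∃ x : A → ℝ, (∀ j, 0 ≤ x j) ∧ (∑ j, x j = 1) ∧ ∀ j, ∑ i, x i * Q i j = x j := by
  classical
  set f : (A → ℝ) → (A → ℝ) := fun x j => ∑ i, x i * Q i j with hf
  set S : Set (A → ℝ) := {x | (∀ i, 0 ≤ x i) ∧ ∑ i, x i = 1} with hS
  have hfS : ∀ x ∈ S, f x ∈ S := by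
    rintro x ⟨hx0, hx1⟩
    constructor
    · intro j
      exact Finset.sum_nonneg fun i _ => mul_nonneg (hx0 i) (hQ.1 i j)
    · rw [Finset.sum_comm]
      calc ∑ i, ∑ j, x i * Q i j = ∑ i, x i * ∑ j, Q i j := by
            congr 1; ext i; rw [Finset.mul_sum]
        _ = 1 := by simp only [hQ.2, mul_one]; exact hx1
  set x0 : A → ℝ := fun _ => (Fintype.card A : ℝ)⁻¹ with hx0
  have hcard : (0:ℝ) < Fintype.card A := by exact_mod_cast Fintype.card_pos
  have hx0S : x0 ∈ S := by
    constructor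
    · intro i; positivity
    · simp only [hx0]
      rw [Finset.sum_const, Finset.card_univ, nsmul_eq_mul, mul_inv_cancel₀ hcard.ne']
  set u : ℕ → (A → ℝ) := fun k => f^[k] x0 with hu
  have huS : ∀ k, u k ∈ S := by
    intro k
    induction k with
    | zero => exact hx0S
    | succ k ih =>
      have : u (k+1) = f (u k) := Function.iterate_succ_apply' f k x0
      rw [this]; exact hfS _ ih
  set y : ℕ → (A → ℝ) := fun n j => (n+1 : ℝ)⁻¹ * ∑ k ∈ range (n+1), u k j with hy
  have hyS : ∀ n, y n ∈ S := by
    intro n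
    have hn : (0:ℝ) < (n:ℝ)+1 := by positivity
    constructor
    · intro i
      exact mul_nonneg (by positivity)
        (Finset.sum_nonneg fun k _ => (huS k).1 i)
    · calc ∑ j, (n+1 : ℝ)⁻¹ * ∑ k ∈ range (n+1), u k j
          = (n+1 : ℝ)⁻¹ * ∑ k ∈ range (n+1), ∑ j, u k j := by
            rw [← Finset.mul_sum, Finset.sum_comm]
        _ = 1 := by
            have : ∀ k ∈ range (n+1), ∑ j, u k j = 1 := fun k _ => (huS k).2
            rw [Finset.sum_congr rfl this]
            simp
            field_simp
  have hsub : S ⊆ Set.univ.pi (fun _ : A => Set.Icc (0:ℝ) 1) := by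
    rintro x ⟨hx0', hx1⟩ i _
    refine ⟨hx0' i, ?_⟩
    rw [← hx1]
    exact Finset.single_le_sum (fun j _ => hx0' j) (Finset.mem_univ i)
  have hclosed : IsClosed S := by
    have h1 : IsClosed {x : A → ℝ | ∀ i, 0 ≤ x i} := by
      have : {x : A → ℝ | ∀ i, 0 ≤ x i} = ⋂ i, {x | 0 ≤ x i} := by
        ext x; simp
      rw [this]
      exact isClosed_iInter fun i => isClosed_le continuous_const (continuous_apply i)
    have h2 : IsClosed {x : A → ℝ | ∑ i, x i = 1} :=
      isClosed_eq (continuous_finset_sum _ fun i _ => continuous_apply i) continuous_const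
    exact h1.inter h2
  have hcompact : IsCompact S :=
    (isCompact_univ_pi fun _ => isCompact_Icc).of_isClosed_subset hclosed hsub
  obtain ⟨x, hxS, φ, hφ, hconv⟩ := hcompact.tendsto_subseq hyS
  refine ⟨x, hxS.1, hxS.2, ?_⟩
  intro j
  have hcoord : ∀ i, Tendsto (fun n => y (φ n) i) atTop (𝓝 (x i)) := by
    intro i
    have := hconv
    rw [tendsto_pi_nhds] at this
    exact this i
  have hlim1 : Tendsto (fun n => ∑ i, y (φ n) i * Q i j) atTop (𝓝 (∑ i, x i * Q i j)) := by
    apply tendsto_finset_sum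
    intro i _
    exact (hcoord i).mul tendsto_const_nhds
  have hiden : ∀ n, ∑ i, y n i * Q i j = y n j + ((n:ℝ)+1)⁻¹ * (u (n+1) j - u 0 j) := by
    intro n
    have hn : ((n:ℝ)+1) ≠ 0 := by positivity
    have step : ∀ k, ∑ i, u k i * Q i j = u (k+1) j := by
      intro k
      have : u (k+1) = f (u k) := Function.iterate_succ_apply' f k x0
      rw [this]
    calc ∑ i, y n i * Q i j
        = ((n:ℝ)+1)⁻¹ * ∑ k ∈ range (n+1), ∑ i, u k i * Q i j := by
          have hterm : ∀ i : A, y n i * Q i j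
              = ((n:ℝ)+1)⁻¹ * ∑ k ∈ range (n+1), u k i * Q i j := by
            intro i
            rw [hy]
            simp only
            rw [mul_assoc, Finset.sum_mul]
          rw [Finset.sum_congr rfl fun i _ => hterm i, ← Finset.mul_sum, Finset.sum_comm]
      _ = ((n:ℝ)+1)⁻¹ * ∑ k ∈ range (n+1), u (k+1) j := by
          rw [Finset.sum_congr rfl fun k _ => step k]
      _ = y n j + ((n:ℝ)+1)⁻¹ * (u (n+1) j - u 0 j) := by
          rw [hy]
          simp only
          have : ∑ k ∈ range (n+1), u (k+1) j
              = ∑ k ∈ range (n+1), u k j + (u (n+1) j - u 0 j) := by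
            rw [Finset.sum_range_succ' (fun k => u k j) n]
            rw [Finset.sum_range_succ]
            ring
          rw [this]
          ring
  have hsmall : Tendsto (fun n => ((φ n : ℝ)+1)⁻¹ * (u (φ n + 1) j - u 0 j)) atTop (𝓝 0) := by
    have hb : ∀ n, |((φ n : ℝ)+1)⁻¹ * (u (φ n + 1) j - u 0 j)| ≤ 2 * ((n:ℝ)+1)⁻¹ := by
      intro n
      have hφn : (n : ℝ) ≤ (φ n : ℝ) := by exact_mod_cast (hφ.le_apply)
      have hpos : (0:ℝ) < (n:ℝ)+1 := by positivity
      have hpos2 : (0:ℝ) < (φ n : ℝ)+1 := by positivity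
      rw [abs_mul, abs_of_pos (inv_pos.mpr hpos2)]
      have h1 : |u (φ n + 1) j - u 0 j| ≤ 2 := by
        have a1 := (huS (φ n + 1)).1 j
        have a2 := (huS 0).1 j
        have b1 : u (φ n + 1) j ≤ 1 := (hsub (huS (φ n + 1)) j (Set.mem_univ j)).2
        have b2 : u 0 j ≤ 1 := (hsub (huS 0) j (Set.mem_univ j)).2
        rw [abs_le]; constructor <;> linarith
      calc ((φ n : ℝ)+1)⁻¹ * |u (φ n + 1) j - u 0 j| ≤ ((φ n : ℝ)+1)⁻¹ * 2 :=
            mul_le_mul_of_nonneg_left h1 (inv_pos.mpr hpos2).le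
        _ ≤ ((n:ℝ)+1)⁻¹ * 2 := by
            have := inv_anti₀ hpos (by linarith : (n:ℝ)+1 ≤ (φ n : ℝ)+1)
            linarith
        _ = 2 * ((n:ℝ)+1)⁻¹ := by ring
    have hz : Tendsto (fun n : ℕ => 2 * ((n:ℝ)+1)⁻¹) atTop (𝓝 0) := by
      have : Tendsto (fun n : ℕ => ((n:ℝ)+1)⁻¹) atTop (𝓝 0) := by
        exact tendsto_one_div_add_atTop_nhds_zero_nat.congr (by intro n; rw [one_div])
      simpa using this.const_mul 2
    apply squeeze_zero_norm hb hz
  have hlim2 : Tendsto (fun n => ∑ i, y (φ n) i * Q i j) atTop (𝓝 (x j)) := by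
    have : (fun n => ∑ i, y (φ n) i * Q i j)
        = fun n => y (φ n) j + ((φ n : ℝ)+1)⁻¹ * (u (φ n + 1) j - u 0 j) := by
      ext n; exact hiden (φ n)
    rw [this]
    simpa using (hcoord j).add hsmall
  exact tendsto_nhds_unique hlim1 hlim2

open Classical in
noncomputable def statDist (Q : A → A → ℝ) : A → ℝ :=
  if h : IsStoch Q then (exists_stationary Q h).choose else fun _ => (Fintype.card A : ℝ)⁻¹

open Classical in
lemma statDist_spec (Q : A → A → ℝ) (hQ : IsStoch Q) :
    (∀ j, 0 ≤ statDist Q j) ∧ (∑ j, statDist Q j = 1) ∧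
      ∀ j, ∑ i, statDist Q i * Q i j = statDist Q j := by
  unfold statDist
  rw [dif_pos hQ]
  exact (exists_stationary Q hQ).choose_spec

end SwapAux

namespace SwapAux
open Finset

variable {A : Type} [Fintype A] [Nonempty A] {T : ℕ}

/-! ### Marginalization / tower property -/

lemma snoc_lt {k : ℕ} (h' : Fin k → A) (j : A) (v : Fin (k+1)) (hv : v.1 < k) :
    (Fin.snoc h' j : Fin (k+1) → A) v = h' ⟨v.1, hv⟩ := by
  simp only [Fin.snoc, hv, dif_pos, cast_eq]
  rfl

lemma xcongr (x : ∀ t : Fin T, (Fin t.1 → A) → A → ℝ) (n : ℕ) (h1 h2 : n < T)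
    {f1 f2 : Fin n → A} (hf : f1 = f2) {v1 v2 : A} (hv : v1 = v2) :
    x ⟨n, h1⟩ f1 v1 = x ⟨n, h2⟩ f2 v2 := by subst hf; subst hv; rfl

noncomputable def partProb (x : ∀ t : Fin T, (Fin t.1 → A) → A → ℝ)
    (k : ℕ) (hk : k ≤ T) (h : Fin k → A) : ℝ :=
  ∏ s : Fin k, x ⟨s.1, lt_of_lt_of_le s.2 hk⟩ (fun u => h ⟨u.1, u.2.trans s.2⟩) (h s)

lemma partProb_top (x : ∀ t : Fin T, (Fin t.1 → A) → A → ℝ) (a : Fin T → A) :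
    partProb x T le_rfl a = transcriptProb x a := rfl

lemma partProb_snoc (x : ∀ t : Fin T, (Fin t.1 → A) → A → ℝ)
    (m : ℕ) (hm : m < T) (h' : Fin m → A) (j : A) :
    partProb x (m+1) hm (Fin.snoc h' j : Fin (m+1) → A) =
      partProb x m hm.le h' * x ⟨m, hm⟩ h' j := by
  unfold partProb
  rw [Fin.prod_univ_castSucc]
  congr 1
  · apply Finset.prod_congr rfl
    intro s _
    refine xcongr x s.1 _ _ ?_ ?_
    · funext u
      exact (snoc_lt h' j _ (u.2.trans s.2)).trans rfl
    · exact (snoc_lt h' j _ s.2).trans (congrArg h' (Fin.eta s s.2))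
  · refine xcongr x m _ _ ?_ ?_
    · funext u
      exact (snoc_lt h' j _ u.2).trans (congrArg h' (Fin.eta u u.2))
    · exact Fin.snoc_last (α := fun _ : Fin (m+1) => A) j h'

lemma peel (x : ∀ t : Fin T, (Fin t.1 → A) → A → ℝ)
    (hx : ∀ t h, ∑ j, x t h j = 1) (m : ℕ) (hm : m < T) (G : (Fin m → A) → ℝ) :
    ∑ h : Fin (m+1) → A, partProb x (m+1) hm h * G (Fin.init h)
      = ∑ h : Fin m → A, partProb x m hm.le h * G h := by
  have key : ∀ (j : A) (h' : Fin m → A),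
      partProb x (m+1) hm (Fin.snoc h' j : Fin (m+1) → A) *
        G (Fin.init (Fin.snoc h' j : Fin (m+1) → A))
        = partProb x m hm.le h' * x ⟨m, hm⟩ h' j * G h' := by
    intro j h'
    rw [partProb_snoc, Fin.init_snoc]
  calc ∑ h : Fin (m+1) → A, partProb x (m+1) hm h * G (Fin.init h)
      = ∑ p : A × (Fin m → A),
          partProb x (m+1) hm (Fin.snoc p.2 p.1 : Fin (m+1) → A) *
            G (Fin.init (Fin.snoc p.2 p.1 : Fin (m+1) → A)) := by
        rw [← Equiv.sum_comp (Fin.snocEquiv (fun _ => A))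
          (fun h => partProb x (m+1) hm h * G (Fin.init h))]
        rfl
    _ = ∑ j : A, ∑ h' : Fin m → A,
          partProb x (m+1) hm (Fin.snoc h' j : Fin (m+1) → A) *
            G (Fin.init (Fin.snoc h' j : Fin (m+1) → A)) := by
        rw [Fintype.sum_prod_type]
    _ = ∑ j : A, ∑ h' : Fin m → A, partProb x m hm.le h' * x ⟨m, hm⟩ h' j * G h' := by
        exact Finset.sum_congr rfl fun j _ => Finset.sum_congr rfl fun h' _ => key j h'
    _ = ∑ h' : Fin m → A, ∑ j : A, partProb x m hm.le h' * x ⟨m, hm⟩ h' j * G h' :=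
        Finset.sum_comm
    _ = ∑ h : Fin m → A, partProb x m hm.le h * G h := by
        apply Finset.sum_congr rfl
        intro h' _
        have : ∀ j : A, partProb x m hm.le h' * x ⟨m, hm⟩ h' j * G h'
            = (partProb x m hm.le h' * G h') * x ⟨m, hm⟩ h' j := fun j => by ring
        rw [Finset.sum_congr rfl fun j _ => this j, ← Finset.mul_sum, hx ⟨m, hm⟩ h', mul_one]

lemma marginal (x : ∀ t : Fin T, (Fin t.1 → A) → A → ℝ)
    (hx : ∀ t h, ∑ j, x t h j = 1) (k : ℕ) (hk : k ≤ T) (g : (Fin k → A) → ℝ) :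
    ∑ a : Fin T → A, transcriptProb x a * g (fun u => a ⟨u.1, lt_of_lt_of_le u.2 hk⟩)
      = ∑ h : Fin k → A, partProb x k hk h * g h := by
  have main : ∀ m (hkm : k ≤ m) (hmT : m ≤ T),
      ∑ h : Fin m → A, partProb x m hmT h * g (fun u => h ⟨u.1, lt_of_lt_of_le u.2 hkm⟩)
        = ∑ h : Fin k → A, partProb x k hk h * g h := by
    intro m
    induction m with
    | zero =>
      intro hkm hmT
      have hk0 : k = 0 := Nat.le_zero.mp hkm
      subst hk0
      apply Finset.sum_congr rfl
      intro h _
      have e : (fun u : Fin 0 => h ⟨u.1, lt_of_lt_of_le u.2 hkm⟩) = h :=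
        funext fun u => absurd u.2 (Nat.not_lt_zero _)
      exact congrArg₂ _ rfl (congrArg g e)
    | succ m ih =>
      intro hkm hmT
      rcases Nat.lt_or_ge k (m+1) with hlt | hge
      · have hkm' : k ≤ m := Nat.lt_succ_iff.mp hlt
        have hmT' : m < T := hmT
        have step := peel x hx m hmT'
          (fun h' : Fin m → A => g (fun u => h' ⟨u.1, lt_of_lt_of_le u.2 hkm'⟩))
        calc ∑ h : Fin (m+1) → A, partProb x (m+1) hmT h *
              g (fun u => h ⟨u.1, lt_of_lt_of_le u.2 hkm⟩)
            = ∑ h : Fin (m+1) → A, partProb x (m+1) hmT h *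
              g (fun u => (Fin.init h) ⟨u.1, lt_of_lt_of_le u.2 hkm'⟩) := by
              apply Finset.sum_congr rfl
              intro h _
              refine congrArg₂ _ rfl (congrArg g (funext fun u => ?_))
              show h ⟨u.1, _⟩ = h (Fin.castSucc ⟨u.1, _⟩)
              exact congrArg h (Fin.ext rfl)
          _ = ∑ h' : Fin m → A, partProb x m hmT'.le h' *
              g (fun u => h' ⟨u.1, lt_of_lt_of_le u.2 hkm'⟩) := step
          _ = ∑ h : Fin k → A, partProb x k hk h * g h := ih hkm' hmT'.le
      · have hkm1 : k = m+1 := le_antisymm hkm hge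
        subst hkm1
        apply Finset.sum_congr rfl
        intro h _
        have e : (fun u : Fin (m+1) => h ⟨u.1, lt_of_lt_of_le u.2 hkm⟩) = h :=
          funext fun u => congrArg h (Fin.eta u u.2)
        exact congrArg₂ _ rfl (congrArg g e)
  have hfin := main T hk le_rfl
  rw [← hfin]
  apply Finset.sum_congr rfl
  intro a _
  exact congrArg₂ _ rfl rfl

omit [Nonempty A] in
lemma transcriptProb_nonneg (x : ∀ t : Fin T, (Fin t.1 → A) → A → ℝ)
    (hx : ∀ t h j, 0 ≤ x t h j) (a : Fin T → A) : 0 ≤ transcriptProb x a :=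
  Finset.prod_nonneg fun t _ => hx t _ _

lemma transcriptProb_sum_one (x : ∀ t : Fin T, (Fin t.1 → A) → A → ℝ)
    (hx : ∀ t h, ∑ j, x t h j = 1) :
    ∑ a : Fin T → A, transcriptProb x a = 1 := by
  have hm := marginal x hx 0 (Nat.zero_le T) (fun _ => 1)
  simp only [mul_one] at hm
  rw [hm]
  rw [Finset.sum_eq_single_of_mem (fun u : Fin 0 => (absurd u.2 (Nat.not_lt_zero _) : A))
    (Finset.mem_univ _)]
  · unfold partProb; simp
  · intro b _ hb
    exact absurd (funext fun u : Fin 0 => absurd u.2 (Nat.not_lt_zero _)) hb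

lemma tower (x : ∀ t : Fin T, (Fin t.1 → A) → A → ℝ)
    (hx : ∀ t h, ∑ j, x t h j = 1) (t : Fin T) (ψ : (Fin t.1 → A) → A → ℝ) :
    ∑ a : Fin T → A, transcriptProb x a * ψ (transcriptPrefix a t) (a t)
      = ∑ a : Fin T → A, transcriptProb x a *
          ∑ j, x t (transcriptPrefix a t) j * ψ (transcriptPrefix a t) j := by
  have ht1 : t.1 + 1 ≤ T := t.2
  have hlhs := marginal x hx (t.1+1) ht1
    (fun h : Fin (t.1+1) → A =>
      ψ (fun u : Fin t.1 => h ⟨u.1, u.2.trans (Nat.lt_succ_self t.1)⟩) (h (Fin.last t.1)))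
  have hrhs := marginal x hx t.1 t.2.le
    (fun h : Fin t.1 → A => ∑ j, x t h j * ψ h j)
  have ht' : t.1 < T := t.2
  have hxt : ∀ (h' : Fin t.1 → A) (j : A), x ⟨t.1, ht'⟩ h' j = x t h' j :=
    fun _ _ => rfl
  calc ∑ a : Fin T → A, transcriptProb x a * ψ (transcriptPrefix a t) (a t)
      = ∑ a : Fin T → A, transcriptProb x a *
          ψ (fun u : Fin t.1 =>
              (fun v : Fin (t.1+1) => a ⟨v.1, lt_of_lt_of_le v.2 ht1⟩)
                ⟨u.1, u.2.trans (Nat.lt_succ_self t.1)⟩)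
            ((fun v : Fin (t.1+1) => a ⟨v.1, lt_of_lt_of_le v.2 ht1⟩) (Fin.last t.1)) := by
        apply Finset.sum_congr rfl
        intro a _
        refine congrArg₂ _ rfl ?_
        exact congrArg (ψ (transcriptPrefix a t)) (congrArg a (Fin.ext rfl))
    _ = ∑ h : Fin (t.1+1) → A, partProb x (t.1+1) ht1 h *
          ψ (fun u => h ⟨u.1, u.2.trans (Nat.lt_succ_self t.1)⟩) (h (Fin.last t.1)) := hlhs
    _ = ∑ p : A × (Fin t.1 → A), partProb x (t.1+1) ht1 (Fin.snoc p.2 p.1 : Fin (t.1+1) → A) *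
          ψ (fun u => (Fin.snoc p.2 p.1 : Fin (t.1+1) → A)
              ⟨u.1, u.2.trans (Nat.lt_succ_self t.1)⟩)
            ((Fin.snoc p.2 p.1 : Fin (t.1+1) → A) (Fin.last t.1)) := by
        rw [← Equiv.sum_comp (Fin.snocEquiv (fun _ => A))
          (fun h : Fin (t.1+1) → A => partProb x (t.1+1) ht1 h *
            ψ (fun u => h ⟨u.1, u.2.trans (Nat.lt_succ_self t.1)⟩) (h (Fin.last t.1)))]
        rfl
    _ = ∑ j : A, ∑ h' : Fin t.1 → A, partProb x (t.1+1) ht1 (Fin.snoc h' j : Fin (t.1+1) → A) *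
          ψ (fun u => (Fin.snoc h' j : Fin (t.1+1) → A)
              ⟨u.1, u.2.trans (Nat.lt_succ_self t.1)⟩)
            ((Fin.snoc h' j : Fin (t.1+1) → A) (Fin.last t.1)) := by
        rw [Fintype.sum_prod_type]
    _ = ∑ h' : Fin t.1 → A, ∑ j : A,
          partProb x t.1 t.2.le h' * (x t h' j * ψ h' j) := by
        rw [Finset.sum_comm]
        apply Finset.sum_congr rfl
        intro h' _
        apply Finset.sum_congr rfl
        intro j _
        rw [partProb_snoc]
        have e1 : (Fin.snoc h' j : Fin (t.1+1) → A) (Fin.last t.1) = j :=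
          Fin.snoc_last (α := fun _ : Fin (t.1+1) => A) j h'
        have e2 : (fun u : Fin t.1 => (Fin.snoc h' j : Fin (t.1+1) → A)
            ⟨u.1, u.2.trans (Nat.lt_succ_self t.1)⟩) = h' :=
          funext fun u => (snoc_lt h' j _ u.2).trans (congrArg h' (Fin.eta u u.2))
        rw [e1, e2, hxt h' j]
        ring
    _ = ∑ h' : Fin t.1 → A, partProb x t.1 t.2.le h' * ∑ j, x t h' j * ψ h' j := by
        apply Finset.sum_congr rfl
        intro h' _
        rw [Finset.mul_sum]
    _ = ∑ a : Fin T → A, transcriptProb x a *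
          ∑ j, x t (transcriptPrefix a t) j * ψ (transcriptPrefix a t) j := hrhs.symm

/-! ### The Blum–Mansour strategy -/

variable [DecidableEq A]

noncomputable def bmQ (η : ℝ) {m : ℕ} (h : Fin m → A) (past : Fin m → A → ℝ) : A → A → ℝ :=
  fun i => hedgeW η (fun j => ∑ s, if h s = i then past s j else 0)

lemma bmQ_stoch (η : ℝ) {m : ℕ} (h : Fin m → A) (past : Fin m → A → ℝ) :
    IsStoch (bmQ η h past) :=
  ⟨fun _ j => hedgeW_nonneg _ _ _, fun _ => hedgeW_sum_one _ _⟩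

noncomputable def bmLoss (T : ℕ) (ℓ : Fin T → A → ℝ) (aa : Fin T → A)
    (i : A) (n : ℕ) (j : A) : ℝ :=
  if hn : n < T then (if aa ⟨n, hn⟩ = i then ℓ ⟨n, hn⟩ j else 0) else 0

lemma bmLoss_fin (T : ℕ) (ℓ : Fin T → A → ℝ) (aa : Fin T → A) (i : A) (t : Fin T) (k : A) :
    bmLoss T ℓ aa i t.1 k = if aa t = i then ℓ t k else 0 := by
  unfold bmLoss
  rw [dif_pos t.2]

lemma bmLoss_Icc (T : ℕ) (ℓ : Fin T → A → ℝ) (hℓ : ∀ t j, ℓ t j ∈ Set.Icc (0:ℝ) 1)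
    (aa : Fin T → A) (i : A) (n : ℕ) (j : A) : bmLoss T ℓ aa i n j ∈ Set.Icc (0:ℝ) 1 := by
  unfold bmLoss
  split
  · split
    · exact hℓ _ _
    · exact ⟨le_refl 0, zero_le_one⟩
  · exact ⟨le_refl 0, zero_le_one⟩

lemma pathwise {T : ℕ} (η Bc : ℝ) (hη : 0 < η)
    (hBc : Real.log (Fintype.card A) / η + η * T / 2 ≤ Bc)
    (ℓ : Fin T → A → ℝ) (hℓ : ∀ t j, ℓ t j ∈ Set.Icc (0:ℝ) 1)
    (aa : Fin T → A) (q : Fin T → A → A → ℝ)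
    (hq : ∀ t i, q t i = hedgeW η (fun j => ∑ u ∈ Finset.range t.1, bmLoss T ℓ aa i u j)) :
    (⨆ μ : A → A, ∑ t, (ℓ t (aa t) - ℓ t (μ (aa t)))) ≤
      (∑ t, (ℓ t (aa t) - ∑ k, q t (aa t) k * ℓ t k)) + (Fintype.card A) * Bc := by
  have key1 : ∀ i j : A,
      (∑ t : Fin T, ∑ k, q t i k * (if aa t = i then ℓ t k else 0))
        ≤ (∑ t : Fin T, (if aa t = i then ℓ t j else 0)) + Bc := by
    intro i j
    have HR := hedge_regret η hη T (bmLoss T ℓ aa i)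
      (fun n k => bmLoss_Icc T ℓ hℓ aa i n k) j
    have e1 : ∑ s ∈ Finset.range T, ∑ k,
        hedgeW η (fun v => ∑ u ∈ Finset.range s, bmLoss T ℓ aa i u v) k * bmLoss T ℓ aa i s k
        = ∑ t : Fin T, ∑ k, q t i k * (if aa t = i then ℓ t k else 0) := by
      rw [← Fin.sum_univ_eq_sum_range (fun s => ∑ k,
        hedgeW η (fun v => ∑ u ∈ Finset.range s, bmLoss T ℓ aa i u v) k
          * bmLoss T ℓ aa i s k) T]
      apply Finset.sum_congr rfl
      intro t _
      apply Finset.sum_congr rfl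
      intro k _
      rw [hq t i, bmLoss_fin]
    have e2 : ∑ s ∈ Finset.range T, bmLoss T ℓ aa i s j
        = ∑ t : Fin T, (if aa t = i then ℓ t j else 0) := by
      rw [← Fin.sum_univ_eq_sum_range (fun s => bmLoss T ℓ aa i s j) T]
      exact Finset.sum_congr rfl fun t _ => bmLoss_fin T ℓ aa i t j
    rw [e1, e2] at HR
    linarith
  have key2 : ∀ i j : A, (∑ t, if aa t = i then ℓ t i - ℓ t j else 0)
      ≤ (∑ t, if aa t = i then ℓ t (aa t) - ∑ k, q t i k * ℓ t k else 0) + Bc := by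
    intro i j
    have hsplit1 : ∀ t : Fin T, (if aa t = i then ℓ t i - ℓ t j else 0)
        = (if aa t = i then ℓ t (aa t) else 0) - (if aa t = i then ℓ t j else 0) := by
      intro t; by_cases h : aa t = i
      · simp [h]
      · simp [h]
    have hsplit2 : ∀ t : Fin T, (if aa t = i then ℓ t (aa t) - ∑ k, q t i k * ℓ t k else 0)
        = (if aa t = i then ℓ t (aa t) else 0)
            - ∑ k, q t i k * (if aa t = i then ℓ t k else 0) := by
      intro t; by_cases h : aa t = i
      · simp [h]
      · simp [h]
    rw [Finset.sum_congr rfl fun t _ => hsplit1 t, Finset.sum_sub_distrib,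
      Finset.sum_congr rfl fun t _ => hsplit2 t, Finset.sum_sub_distrib]
    have := key1 i j
    linarith
  apply ciSup_le
  intro μ
  calc ∑ t, (ℓ t (aa t) - ℓ t (μ (aa t)))
      = ∑ i : A, ∑ t, (if aa t = i then ℓ t i - ℓ t (μ i) else 0) := by
        rw [Finset.sum_comm]
        apply Finset.sum_congr rfl
        intro t _
        simp [Finset.sum_ite_eq]
    _ ≤ ∑ i : A, ((∑ t, if aa t = i then ℓ t (aa t) - ∑ k, q t i k * ℓ t k else 0) + Bc) :=
        Finset.sum_le_sum fun i _ => key2 i (μ i)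
    _ = (∑ i : A, ∑ t, if aa t = i then ℓ t (aa t) - ∑ k, q t i k * ℓ t k else 0)
          + (Fintype.card A) * Bc := by
        rw [Finset.sum_add_distrib, Finset.sum_const, Finset.card_univ, nsmul_eq_mul]
    _ = (∑ t, (ℓ t (aa t) - ∑ k, q t (aa t) k * ℓ t k)) + (Fintype.card A) * Bc := by
        congr 1
        rw [Finset.sum_comm]
        apply Finset.sum_congr rfl
        intro t _
        simp [Finset.sum_ite_eq]

end SwapAux

/-- In the experts setting: (i) for any transcript, the swap regret is
at most `|A|` times the internal regret, i.e.
`R^T_swap ≤ |A| · max_{i,j} Σ_{t : a^t = i} (r^t_i − r^t_j)`; (ii) consequently, for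
`T ≥ 2 ln|A|` there exists an algorithm for the Learner guaranteeing, against any adaptive
Adversary, `E[R^T_swap] ≤ 4|A|√(2T ln|A|)`. -/
theorem swap_regret_bound
    (A : Type) [Fintype A] [Nonempty A] [DecidableEq A] (T : ℕ) :
    -- (i) pointwise reduction of swap regret to internal regret
    (∀ (a : Fin T → A) (r : Fin T → A → ℝ), (∀ t j, r t j ∈ Set.Icc (0 : ℝ) 1) →
      (⨆ μ : A → A, ∑ t, (r t (a t) - r t (μ (a t)))) ≤
        (Fintype.card A) *
          ⨆ p : A × A, ∑ t, if a t = p.1 then r t p.1 - r t p.2 else 0) ∧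
    -- (ii) existence of a no-swap-regret algorithm
    (2 * Real.log (Fintype.card A) ≤ T →
      ∃ σ : ExpertStrategy A T,
        (∀ t h past, (∀ j, 0 ≤ σ t h past j) ∧ ∑ j, σ t h past j = 1) ∧
        ∀ r : ∀ t : Fin T, (Fin t.1 → A) → A → ℝ,
          (∀ t h j, r t h j ∈ Set.Icc (0 : ℝ) 1) →
          ∑ a : Fin T → A, transcriptProb (playOf σ r) a *
              (⨆ μ : A → A, ∑ t, (r t (transcriptPrefix a t) (a t) -
                r t (transcriptPrefix a t) (μ (a t)))) ≤
            4 * (Fintype.card A) * Real.sqrt (2 * T * Real.log (Fintype.card A))) := by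
  classical
  constructor
  · -- Part (i)
    intro a r _
    set X : A × A → ℝ := fun p => ∑ t, if a t = p.1 then r t p.1 - r t p.2 else 0 with hX
    have hbdd : BddAbove (Set.range X) := (Set.finite_range X).bddAbove
    apply ciSup_le
    intro μ
    have h1 : ∑ t, (r t (a t) - r t (μ (a t))) = ∑ i : A, X (i, μ i) := by
      simp only [hX]
      rw [Finset.sum_comm]
      congr 1; ext t
      simp [Finset.sum_ite_eq]
    rw [h1]
    calc ∑ i : A, X (i, μ i) ≤ ∑ _i : A, ⨆ p : A × A, X p :=
          Finset.sum_le_sum fun i _ => le_ciSup hbdd (i, μ i)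
      _ = (Fintype.card A) * ⨆ p : A × A, X p := by
          rw [Finset.sum_const, nsmul_eq_mul]; rfl
  · -- Part (ii)
    intro hT
    by_cases hA1 : Fintype.card A = 1
    · -- trivial case : one action
      refine ⟨fun _ _ _ _ => 1,
        fun t h past => ⟨fun j => zero_le_one, by
          simp [Finset.sum_const, Finset.card_univ, hA1]⟩, ?_⟩
      intro r hr
      have hss : Subsingleton A := Fintype.card_le_one_iff_subsingleton.mp (le_of_eq hA1)
      have hzero : ∀ a : Fin T → A,
          (⨆ μ : A → A, ∑ t, (r t (transcriptPrefix a t) (a t) -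
            r t (transcriptPrefix a t) (μ (a t)))) = 0 := by
        intro a
        have hz : ∀ μ : A → A, ∑ t, (r t (transcriptPrefix a t) (a t) -
            r t (transcriptPrefix a t) (μ (a t))) = 0 := by
          intro μ
          apply Finset.sum_eq_zero
          intro t _
          have : μ (a t) = a t := Subsingleton.elim _ _
          rw [this, sub_self]
        rw [iSup_congr hz]
        exact ciSup_const
      have hL : ∑ a : Fin T → A, transcriptProb (playOf (fun _ _ _ _ => (1:ℝ)) r) a *
          (⨆ μ : A → A, ∑ t, (r t (transcriptPrefix a t) (a t) -
            r t (transcriptPrefix a t) (μ (a t)))) = 0 := by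
        apply Finset.sum_eq_zero
        intro a _
        rw [hzero a, mul_zero]
      rw [hL]
      positivity
    · -- main case : at least two actions
      have hcard2 : 2 ≤ Fintype.card A := by
        have := Fintype.card_pos (α := A)
        omega
      set N : ℝ := (Fintype.card A : ℝ) with hNdef
      have hN2 : (2:ℝ) ≤ N := by rw [hNdef]; exact_mod_cast hcard2
      have hlnN : 0 < Real.log N := Real.log_pos (by linarith)
      have hTpos : (0:ℝ) < (T:ℝ) := by linarith
      set η : ℝ := Real.sqrt (2 * Real.log N / T) with hηdef
      have hη : 0 < η := Real.sqrt_pos.mpr (by positivity)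
      have hη2 : η^2 = 2 * Real.log N / T := Real.sq_sqrt (by positivity)
      set Bc : ℝ := Real.sqrt (2 * (T:ℝ) * Real.log N) with hBdef
      have hBcnn : 0 ≤ Bc := Real.sqrt_nonneg _
      have hB1 : η^2 * T = 2 * Real.log N := by
        rw [hη2]; field_simp
      have hlη : Real.log N / η = η * T / 2 := by
        rw [div_eq_iff hη.ne']
        nlinarith [hB1]
      have hηT : η * (T:ℝ) = Bc := by
        rw [hBdef]
        have h2T : 2 * (T:ℝ) * Real.log N = (η * T)^2 := by nlinarith [hB1]
        rw [h2T, Real.sqrt_sq (by positivity)]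
      have hBc : Real.log N / η + η * T / 2 ≤ Bc := by
        rw [hlη, ← hηT]; linarith
      set σ : ExpertStrategy A T :=
        fun t h past => SwapAux.statDist (SwapAux.bmQ η h past) with hσdef
      refine ⟨σ, fun t h past =>
        ⟨(SwapAux.statDist_spec _ (SwapAux.bmQ_stoch η h past)).1,
         (SwapAux.statDist_spec _ (SwapAux.bmQ_stoch η h past)).2.1⟩, ?_⟩
      intro r hr
      set x := playOf σ r with hxdef
      set Qm : ∀ t : Fin T, (Fin t.1 → A) → A → A → ℝ :=
        fun t h => SwapAux.bmQ η h
          (fun s => r ⟨s.1, s.2.trans t.2⟩ (historyPrefix h s)) with hQmdef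
      have hx0 : ∀ t h j, 0 ≤ x t h j := fun t h j =>
        (SwapAux.statDist_spec (Qm t h) (SwapAux.bmQ_stoch _ _ _)).1 j
      have hx1 : ∀ t h, ∑ j, x t h j = 1 := fun t h =>
        (SwapAux.statDist_spec (Qm t h) (SwapAux.bmQ_stoch _ _ _)).2.1
      have hstat : ∀ t h k, ∑ i, x t h i * Qm t h i k = x t h k := fun t h k =>
        (SwapAux.statDist_spec (Qm t h) (SwapAux.bmQ_stoch _ _ _)).2.2 k
      set ψ : ∀ t : Fin T, (Fin t.1 → A) → A → ℝ :=
        fun t h j => r t h j - ∑ k, Qm t h j k * r t h k with hψdef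
      -- pathwise bound
      have hpath : ∀ a : Fin T → A,
          (⨆ μ : A → A, ∑ t, (r t (transcriptPrefix a t) (a t) -
            r t (transcriptPrefix a t) (μ (a t)))) ≤
          (∑ t, ψ t (transcriptPrefix a t) (a t)) + N * Bc := by
        intro a
        have hq : ∀ (t : Fin T) (i : A), Qm t (transcriptPrefix a t) i
            = SwapAux.hedgeW η (fun j => ∑ u ∈ Finset.range t.1,
                SwapAux.bmLoss T (fun s => r s (transcriptPrefix a s)) a i u j) := by
          intro t i
          refine congrArg (SwapAux.hedgeW η) (funext fun j => ?_)
          rw [← Fin.sum_univ_eq_sum_range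
            (fun u => SwapAux.bmLoss T (fun s => r s (transcriptPrefix a s)) a i u j) t.1]
          apply Finset.sum_congr rfl
          intro s _
          have hsT : s.1 < T := s.2.trans t.2
          have hrhs : SwapAux.bmLoss T (fun s => r s (transcriptPrefix a s)) a i s.1 j
              = if a ⟨s.1, hsT⟩ = i then r ⟨s.1, hsT⟩ (transcriptPrefix a ⟨s.1, hsT⟩) j
                else 0 := by
            unfold SwapAux.bmLoss
            rw [dif_pos hsT]
          rw [hrhs]
          rfl
        exact SwapAux.pathwise η Bc hη hBc (fun s => r s (transcriptPrefix a s))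
          (fun t j => hr t _ j) a (fun t i => Qm t (transcriptPrefix a t) i) hq
      -- the expectation of the martingale term vanishes
      have hψzero : ∀ (t : Fin T) (h : Fin t.1 → A), ∑ j, x t h j * ψ t h j = 0 := by
        intro t h
        have expand : ∑ j, x t h j * ψ t h j
            = (∑ j, x t h j * r t h j)
              - ∑ j, ∑ k, x t h j * (Qm t h j k * r t h k) := by
          rw [← Finset.sum_sub_distrib]
          apply Finset.sum_congr rfl
          intro j _
          rw [hψdef]
          simp only
          rw [mul_sub, Finset.mul_sum]
        rw [expand]
        have swap2 : ∑ j, ∑ k, x t h j * (Qm t h j k * r t h k)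
            = ∑ k, (∑ j, x t h j * Qm t h j k) * r t h k := by
          rw [Finset.sum_comm]
          apply Finset.sum_congr rfl
          intro k _
          rw [Finset.sum_mul]
          apply Finset.sum_congr rfl
          intro j _
          ring
        rw [swap2]
        have hsc : ∀ k : A, (∑ j, x t h j * Qm t h j k) * r t h k = x t h k * r t h k :=
          fun k => by rw [hstat t h k]
        rw [Finset.sum_congr rfl fun k _ => hsc k]
        exact sub_self _
      have hperround : ∀ t : Fin T,
          ∑ a : Fin T → A, transcriptProb x a * ψ t (transcriptPrefix a t) (a t) = 0 := by
        intro t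
        rw [SwapAux.tower x hx1 t (ψ t)]
        apply Finset.sum_eq_zero
        intro a _
        rw [hψzero t (transcriptPrefix a t), mul_zero]
      have hG0 : ∑ a : Fin T → A, transcriptProb x a *
          (∑ t, ψ t (transcriptPrefix a t) (a t)) = 0 := by
        calc ∑ a : Fin T → A, transcriptProb x a * (∑ t, ψ t (transcriptPrefix a t) (a t))
            = ∑ a : Fin T → A, ∑ t, transcriptProb x a * ψ t (transcriptPrefix a t) (a t) := by
              apply Finset.sum_congr rfl
              intro a _
              rw [Finset.mul_sum]
          _ = ∑ t, ∑ a : Fin T → A, transcriptProb x a * ψ t (transcriptPrefix a t) (a t) :=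
              Finset.sum_comm
          _ = 0 := Finset.sum_eq_zero fun t _ => hperround t
      calc ∑ a : Fin T → A, transcriptProb x a *
            (⨆ μ : A → A, ∑ t, (r t (transcriptPrefix a t) (a t) -
              r t (transcriptPrefix a t) (μ (a t))))
          ≤ ∑ a : Fin T → A, transcriptProb x a *
            ((∑ t, ψ t (transcriptPrefix a t) (a t)) + N * Bc) :=
            Finset.sum_le_sum fun a _ => mul_le_mul_of_nonneg_left (hpath a)
              (SwapAux.transcriptProb_nonneg x hx0 a)
        _ = (∑ a : Fin T → A, transcriptProb x a * (∑ t, ψ t (transcriptPrefix a t) (a t)))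
              + (∑ a : Fin T → A, transcriptProb x a) * (N * Bc) := by
            simp only [mul_add]
            rw [Finset.sum_add_distrib, ← Finset.sum_mul]
        _ = N * Bc := by
            rw [hG0, SwapAux.transcriptProb_sum_one x hx1, zero_add, one_mul]
        _ ≤ 4 * N * Bc := by nlinarith

end
end

section
/- In the experts setting with finite action set A and T ≥ ln(|A|·T²), there exists an algorithm for the Learner guaranteeing, against any adaptive Adversary, expected adaptive regret E[R^T_adaptive] ≤ 4·√(T·(ln|A| + 2·ln T)). -/
open scoped BigOperators

noncomputable section

/-- The adaptive regret of a realized transcript `a`: the largest regret to any fixed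
action over any contiguous time interval `[t₁, t₂]`. -/
noncomputable def adaptiveRegret {A : Type} [Fintype A] {T : ℕ}
    (r : ∀ t : Fin T, (Fin t.1 → A) → A → ℝ) (a : Fin T → A) : ℝ :=
  sSup {v : ℝ | ∃ t₁ t₂ : Fin T, t₁ ≤ t₂ ∧ ∃ j : A,
    v = ∑ t, if t₁ ≤ t ∧ t ≤ t₂ then
      r t (transcriptPrefix a t) (a t) - r t (transcriptPrefix a t) j else 0}

namespace AdaptiveAux

open scoped Classical

variable {A : Type} [Fintype A] [Nonempty A] {T : ℕ}

/-- interval experts: (start, end, action) -/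
abbrev Ex (T : ℕ) (A : Type) := Fin T × Fin T × A

def awake (e : Ex T A) (t : Fin T) : Prop := e.1 ≤ t ∧ t ≤ e.2.1

/-- cumulative regret of expert `e` given realized history `h` and past losses `past` -/
def cumG (t : Fin T) (h : Fin t.1 → A) (past : Fin t.1 → A → ℝ) (e : Ex T A) : ℝ :=
  ∑ s : Fin t.1, if awake e ⟨s.1, s.2.trans t.2⟩ then past s (h s) - past s e.2.2 else 0

/-- the exponential-weights strategy over interval experts -/
noncomputable def sigmaEW (A : Type) [Fintype A] (T : ℕ) (η : ℝ) : ExpertStrategy A T :=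
  fun t h past i =>
    (∑ e : Ex T A, if awake e t ∧ e.2.2 = i then Real.exp (η * cumG t h past e) else 0) /
    (∑ e : Ex T A, if awake e t then Real.exp (η * cumG t h past e) else 0)

lemma den_pos (η : ℝ) (t : Fin T) (w : Ex T A → ℝ) (hw : ∀ e, 0 < w e) :
    0 < ∑ e : Ex T A, if awake e t then w e else 0 := by
  obtain ⟨i₀⟩ := ‹Nonempty A›
  refine Finset.sum_pos' (fun e _ => ?_) ⟨(t, t, i₀), Finset.mem_univ _, ?_⟩
  · by_cases hh : awake e t
    · rw [if_pos hh]; exact (hw e).le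
    · rw [if_neg hh]
  rw [if_pos ⟨le_refl t, le_refl t⟩]; exact hw _

lemma ite_nn {c : Prop} [Decidable c] {z : ℝ} (hz : 0 ≤ z) : 0 ≤ if c then z else (0:ℝ) := by
  split
  · exact hz
  · exact le_refl 0

lemma num_sum (S : Ex T A → Prop) (w : Ex T A → ℝ) :
    ∑ i : A, ∑ e : Ex T A, (if S e ∧ e.2.2 = i then w e else 0)
      = ∑ e : Ex T A, if S e then w e else 0 := by
  rw [Finset.sum_comm]
  refine Finset.sum_congr rfl fun e _ => ?_
  by_cases h : S e
  · simp [h]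
  · simp [h]

lemma sigmaEW_dist (η : ℝ) (t : Fin T) (h : Fin t.1 → A) (past : Fin t.1 → A → ℝ) :
    (∀ j, 0 ≤ sigmaEW A T η t h past j) ∧ ∑ j, sigmaEW A T η t h past j = 1 := by
  have hd : 0 < ∑ e : Ex T A, if awake e t then Real.exp (η * cumG t h past e) else 0 :=
    den_pos η t _ (fun e => Real.exp_pos _)
  constructor
  · intro j
    apply div_nonneg _ hd.le
    refine Finset.sum_nonneg fun e _ => ?_
    by_cases hh : awake e t ∧ e.2.2 = j
    · rw [if_pos hh]; exact (Real.exp_pos _).le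
    · rw [if_neg hh]
  · unfold sigmaEW
    rw [← Finset.sum_div, num_sum (fun e => awake e t), div_self hd.ne']


variable (r : ∀ t : Fin T, (Fin t.1 → A) → A → ℝ)

/-- cumulative (truncated at round `n`) regret of expert `e` along transcript `a` -/
noncomputable def Gn (a : Fin T → A) (n : ℕ) (e : Ex T A) : ℝ :=
  ∑ t : Fin T, if t.1 < n ∧ awake e t then
    r t (transcriptPrefix a t) (a t) - r t (transcriptPrefix a t) e.2.2 else 0

omit [Nonempty A] in
lemma sum_lt_eq {n : ℕ} (hn : n ≤ T) (F : Fin T → ℝ) :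
    ∑ t : Fin T, (if t.1 < n then F t else 0)
      = ∑ s : Fin n, F ⟨s.1, lt_of_lt_of_le s.2 hn⟩ := by
  set F' : ℕ → ℝ := fun i => if h : i < T then F ⟨i, h⟩ else 0 with hF'
  have h1 : ∑ t : Fin T, (if t.1 < n then F t else 0)
      = ∑ i ∈ Finset.range T, (if i < n then F' i else 0) := by
    rw [← Fin.sum_univ_eq_sum_range]
    refine Finset.sum_congr rfl fun t _ => ?_
    by_cases h : t.1 < n
    · rw [if_pos h, if_pos h]; simp only [hF']; rw [dif_pos t.2]
    · rw [if_neg h, if_neg h]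
  have h2 : ∑ s : Fin n, F ⟨s.1, lt_of_lt_of_le s.2 hn⟩ = ∑ i ∈ Finset.range n, F' i := by
    rw [← Fin.sum_univ_eq_sum_range]
    refine Finset.sum_congr rfl fun s _ => ?_
    simp only [hF']; rw [dif_pos (lt_of_lt_of_le s.2 hn)]
  rw [h1, h2, ← Finset.sum_subset (Finset.range_subset_range.mpr hn)]
  · exact Finset.sum_congr rfl fun i hi => if_pos (Finset.mem_range.mp hi)
  · intro x _ hx
    exact if_neg (fun hlt => hx (Finset.mem_range.mpr hlt))

omit [Nonempty A] in
lemma cumG_eq (a : Fin T → A) (t : Fin T) (e : Ex T A) :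
    cumG t (transcriptPrefix a t)
      (fun s => r ⟨s.1, s.2.trans t.2⟩ (historyPrefix (transcriptPrefix a t) s)) e
    = Gn r a t.1 e := by
  unfold cumG Gn
  have key : ∀ u : Fin T,
      (if u.1 < t.1 ∧ awake e u then
        r u (transcriptPrefix a u) (a u) - r u (transcriptPrefix a u) e.2.2 else 0)
      = (if u.1 < t.1 then
          (if awake e u then
            r u (transcriptPrefix a u) (a u) - r u (transcriptPrefix a u) e.2.2 else 0)
        else 0) := by
    intro u
    by_cases h1 : u.1 < t.1 <;> by_cases h2 : awake e u <;> simp [h1, h2]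
  rw [Finset.sum_congr rfl (fun u _ => key u),
    sum_lt_eq (le_of_lt t.2)
      (F := fun u => if awake e u then
        r u (transcriptPrefix a u) (a u) - r u (transcriptPrefix a u) e.2.2 else 0)]
  refine Finset.sum_congr rfl fun s _ => ?_
  rfl

omit [Nonempty A] in
lemma ew_apply (η : ℝ) (a : Fin T → A) (t : Fin T) (i : A) :
    playOf (sigmaEW A T η) r t (transcriptPrefix a t) i =
      (∑ e : Ex T A, if awake e t ∧ e.2.2 = i then Real.exp (η * Gn r a t.1 e) else 0) /
      (∑ e : Ex T A, if awake e t then Real.exp (η * Gn r a t.1 e) else 0) := by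
  show sigmaEW A T η t (transcriptPrefix a t) _ i = _
  unfold sigmaEW
  simp only [cumG_eq r a t]


/-- realized transcript probability truncated at round `n` -/
noncomputable def Pn (η : ℝ) (a : Fin T → A) (n : ℕ) : ℝ :=
  ∏ t : Fin T, if t.1 < n then playOf (sigmaEW A T η) r t (transcriptPrefix a t) (a t) else 1

lemma Pn_nonneg (η : ℝ) (a : Fin T → A) (n : ℕ) : 0 ≤ Pn r η a n := by
  refine Finset.prod_nonneg fun t _ => ?_
  by_cases h : t.1 < n
  · rw [if_pos h]
    exact (sigmaEW_dist η t _ _).1 (a t)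
  · rw [if_neg h]; norm_num

omit [Nonempty A] in
lemma prefix_congr {a a' : Fin T → A} {n : ℕ} (hag : ∀ t : Fin T, t.1 < n → a t = a' t)
    {t : Fin T} (ht : t.1 ≤ n) : transcriptPrefix a t = transcriptPrefix a' t :=
  funext fun s => hag _ (lt_of_lt_of_le s.2 ht)

omit [Nonempty A] in
lemma Gn_congr {a a' : Fin T → A} {n : ℕ} (hag : ∀ t : Fin T, t.1 < n → a t = a' t)
    (e : Ex T A) : Gn r a n e = Gn r a' n e := by
  unfold Gn
  refine Finset.sum_congr rfl fun t _ => ?_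
  by_cases h : t.1 < n ∧ awake e t
  · rw [if_pos h, if_pos h, prefix_congr hag (le_of_lt h.1), hag t h.1]
  · rw [if_neg h, if_neg h]

lemma Pn_congr (η : ℝ) {a a' : Fin T → A} {n : ℕ} (hag : ∀ t : Fin T, t.1 < n → a t = a' t) :
    Pn r η a n = Pn r η a' n := by
  unfold Pn
  refine Finset.prod_congr rfl fun t _ => ?_
  by_cases h : t.1 < n
  · rw [if_pos h, if_pos h, prefix_congr hag (le_of_lt h), hag t h]
  · rw [if_neg h, if_neg h]

omit [Nonempty A] in
lemma Gn_succ (a : Fin T → A) {n : ℕ} (hn : n < T) (e : Ex T A) :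
    Gn r a (n + 1) e = Gn r a n e +
      (if awake e ⟨n, hn⟩ then
        r ⟨n, hn⟩ (transcriptPrefix a ⟨n, hn⟩) (a ⟨n, hn⟩)
          - r ⟨n, hn⟩ (transcriptPrefix a ⟨n, hn⟩) e.2.2 else 0) := by
  have point : ∀ t : Fin T, (if t.1 < n + 1 ∧ awake e t then
        r t (transcriptPrefix a t) (a t) - r t (transcriptPrefix a t) e.2.2 else 0)
      = (if t.1 < n ∧ awake e t then
          r t (transcriptPrefix a t) (a t) - r t (transcriptPrefix a t) e.2.2 else 0)
        + (if t = (⟨n, hn⟩ : Fin T) then (if awake e t then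
            r t (transcriptPrefix a t) (a t) - r t (transcriptPrefix a t) e.2.2 else 0)
          else 0) := by
    intro t
    by_cases h1 : t = (⟨n, hn⟩ : Fin T)
    · have ht1 : (t.1:ℕ) = n := by rw [h1]
      have h2 : (t.1:ℕ) < n + 1 := by omega
      have h3 : ¬((t.1:ℕ) < n) := by omega
      by_cases h4 : awake e t
      · rw [if_pos ⟨h2, h4⟩, if_neg (fun hc => h3 hc.1), if_pos h1, if_pos h4, zero_add]
      · rw [if_neg (fun hc => h4 hc.2), if_neg (fun hc => h4 hc.2), if_pos h1, if_neg h4,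
          zero_add]
    · have hne : (t.1:ℕ) ≠ n := fun hh => h1 (Fin.ext hh)
      have h2 : ((t.1:ℕ) < n + 1) ↔ ((t.1:ℕ) < n) := by omega
      rw [if_neg h1, add_zero]
      by_cases h4 : (t.1:ℕ) < n ∧ awake e t
      · rw [if_pos ⟨h2.mpr h4.1, h4.2⟩, if_pos h4]
      · rw [if_neg, if_neg h4]
        rintro ⟨hc1, hc2⟩; exact h4 ⟨h2.mp hc1, hc2⟩
  unfold Gn
  rw [Finset.sum_congr rfl (fun t _ => point t), Finset.sum_add_distrib]
  congr 1
  simp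

lemma Pn_succ (η : ℝ) (a : Fin T → A) {n : ℕ} (hn : n < T) :
    Pn r η a (n + 1) = Pn r η a n *
      playOf (sigmaEW A T η) r ⟨n, hn⟩ (transcriptPrefix a ⟨n, hn⟩) (a ⟨n, hn⟩) := by
  have point : ∀ t : Fin T,
      (if t.1 < n + 1 then playOf (sigmaEW A T η) r t (transcriptPrefix a t) (a t) else 1)
      = (if t.1 < n then playOf (sigmaEW A T η) r t (transcriptPrefix a t) (a t) else 1)
        * (if t = (⟨n, hn⟩ : Fin T) then
            playOf (sigmaEW A T η) r t (transcriptPrefix a t) (a t) else 1) := by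
    intro t
    by_cases h1 : t = (⟨n, hn⟩ : Fin T)
    · have ht1 : (t.1:ℕ) = n := by rw [h1]
      have h2 : (t.1:ℕ) < n + 1 := by omega
      have h3 : ¬((t.1:ℕ) < n) := by omega
      rw [if_pos h2, if_neg h3, if_pos h1, one_mul]
    · have hne : (t.1:ℕ) ≠ n := fun hh => h1 (Fin.ext hh)
      have h2 : ((t.1:ℕ) < n + 1) ↔ ((t.1:ℕ) < n) := by omega
      rw [if_neg h1, mul_one]
      by_cases h4 : (t.1:ℕ) < n
      · rw [if_pos (h2.mpr h4), if_pos h4]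
      · rw [if_neg (fun hc => h4 (h2.mp hc)), if_neg h4]
  unfold Pn
  rw [Finset.prod_congr rfl (fun t _ => point t), Finset.prod_mul_distrib]
  congr 1
  simp


lemma exp_line {η p : ℝ} (hp0 : 0 ≤ p) (hp1 : p ≤ 1) :
    Real.exp (η * p) ≤ 1 + p * (Real.exp η - 1) := by
  have h := convexOn_exp.2 (Set.mem_univ (0:ℝ)) (Set.mem_univ η)
    (by linarith : (0:ℝ) ≤ 1 - p) hp0 (by ring)
  simp only [smul_eq_mul, mul_zero, zero_add, Real.exp_zero, mul_one] at h
  calc Real.exp (η * p) = Real.exp (p * η) := by rw [mul_comm]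
    _ ≤ (1 - p) * 1 + p * Real.exp η := by simpa using h
    _ = 1 + p * (Real.exp η - 1) := by ring

lemma exp_quad {η : ℝ} (h0 : 0 ≤ η) (h1 : η ≤ 1) :
    Real.exp η + Real.exp (-η) ≤ 2 + 2 * η ^ 2 := by
  have habs : |η| ≤ 1 := by rwa [abs_of_nonneg h0]
  have habs' : |(-η)| ≤ 1 := by rwa [abs_neg]
  have b1 := Real.exp_bound habs (by norm_num : 0 < 2)
  have b2 := Real.exp_bound habs' (by norm_num : 0 < 2)
  simp only [Finset.sum_range_succ, Finset.sum_range_zero, pow_zero, pow_one,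
    Nat.factorial, abs_of_nonneg h0, abs_neg] at b1 b2
  rw [abs_le] at b1 b2
  have e1 := b1.2
  have e2 := b2.2
  norm_num at e1 e2
  nlinarith [sq_nonneg η]

set_option maxHeartbeats 1600000 in
lemma core (η : ℝ) (hη0 : 0 ≤ η) (hη1 : η ≤ 1) (S : Ex T A → Prop) (hS : ∃ e, S e)
    (w : Ex T A → ℝ) (hw : ∀ e, 0 < w e) (ρ : A → ℝ) (hρ : ∀ i, 0 ≤ ρ i ∧ ρ i ≤ 1) :
    ∑ v : A, ((∑ e : Ex T A, if S e ∧ e.2.2 = v then w e else 0) /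
        (∑ e : Ex T A, if S e then w e else 0)) *
      (∑ e : Ex T A, w e * (if S e then Real.exp (η * (ρ v - ρ e.2.2)) else 1))
    ≤ Real.exp (2 * η ^ 2) * ∑ e : Ex T A, w e := by
  obtain ⟨e₀, he₀⟩ := hS
  set Wa := ∑ e : Ex T A, if S e then w e else 0 with hWadef
  have hWa : 0 < Wa := by
    refine Finset.sum_pos' (fun e _ => ite_nn (hw e).le) ⟨e₀, Finset.mem_univ _, ?_⟩
    rw [if_pos he₀]; exact hw e₀
  set num : A → ℝ := fun v => ∑ e : Ex T A, if S e ∧ e.2.2 = v then w e else 0 with hnumdef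
  have hnum0 : ∀ v, 0 ≤ num v := fun v => Finset.sum_nonneg fun e _ => ite_nn (hw e).le
  set x : A → ℝ := fun v => num v / Wa with hxdef
  have hx0 : ∀ v, 0 ≤ x v := fun v => div_nonneg (hnum0 v) hWa.le
  have hx1 : ∑ v : A, x v = 1 := by
    rw [hxdef]
    simp only
    rw [← Finset.sum_div, hnumdef]
    simp only
    rw [num_sum S w, ← hWadef, div_self hWa.ne']
  set m := ∑ v : A, x v * ρ v with hmdef
  have hm0 : 0 ≤ m := Finset.sum_nonneg fun v _ => mul_nonneg (hx0 v) (hρ v).1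
  have hm1 : m ≤ 1 := by
    rw [hmdef, ← hx1]
    exact Finset.sum_le_sum fun v _ => by nlinarith [(hρ v).2, hx0 v]
  -- fiber identity
  have fiber : ∑ e : Ex T A, (if S e then w e * ρ e.2.2 else 0) = Wa * m := by
    have h1 : Wa * m = ∑ v : A, num v * ρ v := by
      rw [hmdef, Finset.mul_sum]
      refine Finset.sum_congr rfl fun v _ => ?_
      rw [hxdef]
      field_simp
    have h2 : ∀ v : A, num v * ρ v = ∑ e : Ex T A, if S e ∧ e.2.2 = v then w e * ρ v else 0 := by
      intro v
      rw [hnumdef]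
      simp only
      rw [Finset.sum_mul]
      refine Finset.sum_congr rfl fun e _ => ?_
      split
      · rfl
      · rw [zero_mul]
    rw [h1, Finset.sum_congr rfl (fun v _ => h2 v), Finset.sum_comm]
    refine Finset.sum_congr rfl fun e _ => ?_
    by_cases h : S e
    · simp [h]
    · simp [h]
  set Ws := ∑ e : Ex T A, if S e then (0:ℝ) else w e with hWsdef
  have hWs0 : 0 ≤ Ws := Finset.sum_nonneg fun e _ => by
    split
    · exact le_refl 0
    · exact (hw e).le
  set B := ∑ e : Ex T A, if S e then w e * Real.exp (-(η * ρ e.2.2)) else 0 with hBdef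
  have hB0 : 0 ≤ B := Finset.sum_nonneg fun e _ =>
    ite_nn (mul_nonneg (hw e).le (Real.exp_pos _).le)
  have inner : ∀ v : A, ∑ e : Ex T A, w e * (if S e then Real.exp (η * (ρ v - ρ e.2.2)) else 1)
      = Ws + Real.exp (η * ρ v) * B := by
    intro v
    have point : ∀ e : Ex T A, w e * (if S e then Real.exp (η * (ρ v - ρ e.2.2)) else 1)
        = (if S e then (0:ℝ) else w e)
          + Real.exp (η * ρ v) * (if S e then w e * Real.exp (-(η * ρ e.2.2)) else 0) := by
      intro e
      by_cases h : S e
      · rw [if_pos h, if_pos h, if_pos h, zero_add]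
        have harg : η * (ρ v - ρ e.2.2) = η * ρ v + (-(η * ρ e.2.2)) := by ring
        rw [harg, Real.exp_add]
        ring
      · rw [if_neg h, if_neg h, if_neg h, mul_zero, add_zero, mul_one]
    rw [Finset.sum_congr rfl (fun e _ => point e), Finset.sum_add_distrib, ← Finset.mul_sum,
      hWsdef, hBdef]
  have lhs_eq : ∑ v : A, x v *
        (∑ e : Ex T A, w e * (if S e then Real.exp (η * (ρ v - ρ e.2.2)) else 1))
      = Ws + (∑ v : A, x v * Real.exp (η * ρ v)) * B := by
    rw [Finset.sum_congr rfl (fun v _ => by rw [inner v])]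
    have : ∀ v : A, x v * (Ws + Real.exp (η * ρ v) * B)
        = x v * Ws + (x v * Real.exp (η * ρ v)) * B := by intro v; ring
    rw [Finset.sum_congr rfl (fun v _ => this v), Finset.sum_add_distrib, ← Finset.sum_mul,
      ← Finset.sum_mul, hx1, one_mul]
  set Aexp := ∑ v : A, x v * Real.exp (η * ρ v) with hAdef
  have hA0 : 0 ≤ Aexp := Finset.sum_nonneg fun v _ => mul_nonneg (hx0 v) (Real.exp_pos _).le
  have hA : Aexp ≤ 1 + (Real.exp η - 1) * m := by
    have step : ∀ v : A, x v * Real.exp (η * ρ v) ≤ x v * (1 + ρ v * (Real.exp η - 1)) :=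
      fun v => mul_le_mul_of_nonneg_left (exp_line (hρ v).1 (hρ v).2) (hx0 v)
    calc Aexp ≤ ∑ v : A, x v * (1 + ρ v * (Real.exp η - 1)) := Finset.sum_le_sum fun v _ => step v
      _ = (∑ v : A, x v) + (Real.exp η - 1) * ∑ v : A, x v * ρ v := by
          rw [Finset.mul_sum, ← Finset.sum_add_distrib]
          exact Finset.sum_congr rfl fun v _ => by ring
      _ = 1 + (Real.exp η - 1) * m := by rw [hx1, hmdef]
  have hB : B ≤ Wa + (Real.exp (-η) - 1) * (Wa * m) := by
    have step : ∀ e : Ex T A, (if S e then w e * Real.exp (-(η * ρ e.2.2)) else 0)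
        ≤ (if S e then w e else 0) + (Real.exp (-η) - 1) * (if S e then w e * ρ e.2.2 else 0) := by
      intro e
      by_cases h : S e
      · rw [if_pos h, if_pos h, if_pos h]
        have hexp : Real.exp (-(η * ρ e.2.2)) ≤ 1 + ρ e.2.2 * (Real.exp (-η) - 1) := by
          have := exp_line (η := -η) (hρ e.2.2).1 (hρ e.2.2).2
          rwa [show (-η) * ρ e.2.2 = -(η * ρ e.2.2) by ring] at this
        nlinarith [(hw e).le, hexp, hw e]
      · rw [if_neg h, if_neg h, if_neg h]
        norm_num
    calc B ≤ ∑ e : Ex T A, ((if S e then w e else 0)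
          + (Real.exp (-η) - 1) * (if S e then w e * ρ e.2.2 else 0)) :=
        Finset.sum_le_sum fun e _ => step e
      _ = Wa + (Real.exp (-η) - 1) * (Wa * m) := by
          rw [Finset.sum_add_distrib, ← Finset.mul_sum, fiber, hWadef]
  have hmul : Real.exp η * Real.exp (-η) = 1 := by
    rw [← Real.exp_add]; simp
  have hquad := exp_quad hη0 hη1
  have hge : 1 + η ≤ Real.exp η := by have := Real.add_one_le_exp η; linarith
  have hle1 : Real.exp (-η) ≤ 1 := by nlinarith [Real.exp_pos (-η), Real.exp_pos η]
  have key : (1 + (Real.exp η - 1) * m) * (Wa + (Real.exp (-η) - 1) * (Wa * m))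
      ≤ (1 + 2 * η ^ 2) * Wa := by
    have hfac : (1 + (Real.exp η - 1) * m) * (1 + (Real.exp (-η) - 1) * m) ≤ 1 + 2 * η ^ 2 := by
      nlinarith [mul_nonneg (sub_nonneg.mpr (by nlinarith : (1:ℝ) ≤ Real.exp η))
          (sub_nonneg.mpr hle1), hm0, hm1, hquad, sq_nonneg m,
        mul_nonneg hm0 hm0, mul_nonneg (mul_nonneg hm0 hm0) (sub_nonneg.mpr hle1)]
    calc (1 + (Real.exp η - 1) * m) * (Wa + (Real.exp (-η) - 1) * (Wa * m))
        = ((1 + (Real.exp η - 1) * m) * (1 + (Real.exp (-η) - 1) * m)) * Wa := by ring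
      _ ≤ (1 + 2 * η ^ 2) * Wa := by
          exact mul_le_mul_of_nonneg_right hfac hWa.le
  have split : ∑ e : Ex T A, w e = Ws + Wa := by
    rw [hWsdef, hWadef, ← Finset.sum_add_distrib]
    refine Finset.sum_congr rfl fun e _ => ?_
    by_cases h : S e
    · rw [if_pos h, if_pos h, zero_add]
    · rw [if_neg h, if_neg h, add_zero]
  have hone : (1:ℝ) + (Real.exp η - 1) * m ≥ 0 := by nlinarith
  calc ∑ v : A, x v * (∑ e : Ex T A, w e * (if S e then Real.exp (η * (ρ v - ρ e.2.2)) else 1))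
      = Ws + Aexp * B := lhs_eq
    _ ≤ Ws + (1 + (Real.exp η - 1) * m) * (Wa + (Real.exp (-η) - 1) * (Wa * m)) := by
        have := mul_le_mul hA hB hB0 hone
        linarith
    _ ≤ Ws + (1 + 2 * η ^ 2) * Wa := by linarith
    _ ≤ (1 + 2 * η ^ 2) * (Ws + Wa) := by nlinarith [sq_nonneg η]
    _ ≤ Real.exp (2 * η ^ 2) * (Ws + Wa) := by
        have h1 : (1:ℝ) + 2 * η ^ 2 ≤ Real.exp (2 * η ^ 2) := by
          have := Real.add_one_le_exp (2 * η ^ 2); linarith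
        have h2 : (0:ℝ) ≤ Ws + Wa := by linarith
        exact mul_le_mul_of_nonneg_right h1 h2
    _ = Real.exp (2 * η ^ 2) * ∑ e : Ex T A, w e := by rw [split]


omit [Nonempty A] in
lemma split_sum (τ : Fin T) (F : (Fin T → A) → ℝ) :
    ∑ a : Fin T → A, F a
      = ∑ q : {j : Fin T // j ≠ τ} → A, ∑ v : A, F ((Equiv.funSplitAt τ A).symm (v, q)) := by
  rw [← Equiv.sum_comp (Equiv.funSplitAt τ A).symm F, Fintype.sum_prod_type, Finset.sum_comm]

omit [Nonempty A] in
lemma aOf_same (τ : Fin T) (rest : {j : Fin T // j ≠ τ} → A) (v : A) :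
    (Equiv.funSplitAt τ A).symm (v, rest) τ = v := by
  simp [Equiv.funSplitAt, Equiv.piSplitAt]

omit [Nonempty A] in
lemma aOf_agree (τ : Fin T) (rest : {j : Fin T // j ≠ τ} → A) (v v' : A)
    {t : Fin T} (ht : t ≠ τ) :
    (Equiv.funSplitAt τ A).symm (v, rest) t = (Equiv.funSplitAt τ A).symm (v', rest) t := by
  simp [Equiv.funSplitAt, Equiv.piSplitAt, ht]

omit [Nonempty A] in
lemma lt_ne_tau {n : ℕ} (hn : n < T) {t : Fin T} (ht : t.1 < n) : t ≠ (⟨n, hn⟩ : Fin T) :=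
  fun he => by rw [he] at ht; exact Nat.lt_irrefl n ht

lemma playOf_sum_one (η : ℝ) (t : Fin T) (h : Fin t.1 → A) :
    ∑ v : A, playOf (sigmaEW A T η) r t h v = 1 :=
  (sigmaEW_dist η t h _).2

lemma step_mass (η : ℝ) {n : ℕ} (hn : n < T) (rest : {j : Fin T // j ≠ (⟨n, hn⟩ : Fin T)} → A) :
    ∑ v : A, Pn r η ((Equiv.funSplitAt (⟨n, hn⟩ : Fin T) A).symm (v, rest)) (n + 1)
      = Pn r η ((Equiv.funSplitAt (⟨n, hn⟩ : Fin T) A).symm (Classical.arbitrary A, rest)) n := by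
  have key : ∀ v : A, Pn r η ((Equiv.funSplitAt (⟨n, hn⟩ : Fin T) A).symm (v, rest)) (n + 1)
      = Pn r η ((Equiv.funSplitAt (⟨n, hn⟩ : Fin T) A).symm (Classical.arbitrary A, rest)) n
        * playOf (sigmaEW A T η) r ⟨n, hn⟩
            (transcriptPrefix
              ((Equiv.funSplitAt (⟨n, hn⟩ : Fin T) A).symm (Classical.arbitrary A, rest))
              ⟨n, hn⟩) v := by
    intro v
    have hag : ∀ t : Fin T, t.1 < n →
        (Equiv.funSplitAt (⟨n, hn⟩ : Fin T) A).symm (v, rest) t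
          = (Equiv.funSplitAt (⟨n, hn⟩ : Fin T) A).symm (Classical.arbitrary A, rest) t :=
      fun t ht => aOf_agree _ rest _ _ (lt_ne_tau hn ht)
    rw [Pn_succ r η _ hn, Pn_congr r η hag, prefix_congr hag (le_refl n), aOf_same]
  rw [Finset.sum_congr rfl (fun v _ => key v), ← Finset.mul_sum, playOf_sum_one, mul_one]

lemma step_pot (η : ℝ) (hη0 : 0 ≤ η) (hη1 : η ≤ 1)
    (hr : ∀ t h j, r t h j ∈ Set.Icc (0:ℝ) 1) {n : ℕ} (hn : n < T)
    (rest : {j : Fin T // j ≠ (⟨n, hn⟩ : Fin T)} → A) :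
    ∑ v : A, Pn r η ((Equiv.funSplitAt (⟨n, hn⟩ : Fin T) A).symm (v, rest)) (n + 1) *
        (∑ e : Ex T A, Real.exp
          (η * Gn r ((Equiv.funSplitAt (⟨n, hn⟩ : Fin T) A).symm (v, rest)) (n + 1) e))
      ≤ Real.exp (2 * η ^ 2) *
        (Pn r η ((Equiv.funSplitAt (⟨n, hn⟩ : Fin T) A).symm (Classical.arbitrary A, rest)) n *
          (∑ e : Ex T A, Real.exp (η *
            Gn r ((Equiv.funSplitAt (⟨n, hn⟩ : Fin T) A).symm (Classical.arbitrary A, rest)) n e))) := by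
  have hag : ∀ v : A, ∀ t : Fin T, t.1 < n →
      (Equiv.funSplitAt (⟨n, hn⟩ : Fin T) A).symm (v, rest) t
        = (Equiv.funSplitAt (⟨n, hn⟩ : Fin T) A).symm (Classical.arbitrary A, rest) t :=
    fun v t ht => aOf_agree _ rest _ _ (lt_ne_tau hn ht)
  set b : Fin T → A := (Equiv.funSplitAt (⟨n, hn⟩ : Fin T) A).symm (Classical.arbitrary A, rest)
    with hb
  have keyP : ∀ v : A, Pn r η ((Equiv.funSplitAt (⟨n, hn⟩ : Fin T) A).symm (v, rest)) (n + 1)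
      = Pn r η b n * playOf (sigmaEW A T η) r ⟨n, hn⟩ (transcriptPrefix b ⟨n, hn⟩) v := by
    intro v
    rw [Pn_succ r η _ hn, Pn_congr r η (hag v), prefix_congr (hag v) (le_refl n), aOf_same]
  have keyG : ∀ v : A, ∀ e : Ex T A,
      Real.exp (η * Gn r ((Equiv.funSplitAt (⟨n, hn⟩ : Fin T) A).symm (v, rest)) (n + 1) e)
      = Real.exp (η * Gn r b n e) * (if awake e ⟨n, hn⟩ then
          Real.exp (η * (r ⟨n, hn⟩ (transcriptPrefix b ⟨n, hn⟩) v
            - r ⟨n, hn⟩ (transcriptPrefix b ⟨n, hn⟩) e.2.2)) else 1) := by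
    intro v e
    rw [Gn_succ r _ hn e, Gn_congr r (hag v) e, prefix_congr (hag v) (le_refl n), aOf_same]
    by_cases h : awake e (⟨n, hn⟩ : Fin T)
    · rw [if_pos h, if_pos h, mul_add, Real.exp_add]
    · rw [if_neg h, if_neg h, add_zero, mul_one]
  have trans1 : ∑ v : A, Pn r η ((Equiv.funSplitAt (⟨n, hn⟩ : Fin T) A).symm (v, rest)) (n + 1) *
        (∑ e : Ex T A, Real.exp
          (η * Gn r ((Equiv.funSplitAt (⟨n, hn⟩ : Fin T) A).symm (v, rest)) (n + 1) e))
      = Pn r η b n * ∑ v : A,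
          playOf (sigmaEW A T η) r ⟨n, hn⟩ (transcriptPrefix b ⟨n, hn⟩) v *
          (∑ e : Ex T A, Real.exp (η * Gn r b n e) * (if awake e ⟨n, hn⟩ then
            Real.exp (η * (r ⟨n, hn⟩ (transcriptPrefix b ⟨n, hn⟩) v
              - r ⟨n, hn⟩ (transcriptPrefix b ⟨n, hn⟩) e.2.2)) else 1)) := by
    rw [Finset.mul_sum]
    refine Finset.sum_congr rfl fun v _ => ?_
    rw [keyP v, Finset.sum_congr rfl (fun e _ => keyG v e)]
    ring
  have hxform : ∀ v : A, playOf (sigmaEW A T η) r ⟨n, hn⟩ (transcriptPrefix b ⟨n, hn⟩) v =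
      (∑ e : Ex T A, if awake e (⟨n, hn⟩ : Fin T) ∧ e.2.2 = v then
          Real.exp (η * Gn r b n e) else 0) /
      (∑ e : Ex T A, if awake e (⟨n, hn⟩ : Fin T) then Real.exp (η * Gn r b n e) else 0) :=
    fun v => ew_apply r η b ⟨n, hn⟩ v
  have hcore := core (η := η) hη0 hη1 (fun e => awake e (⟨n, hn⟩ : Fin T))
    ⟨((⟨n, hn⟩ : Fin T), (⟨n, hn⟩ : Fin T), Classical.arbitrary A), le_refl _, le_refl _⟩
    (fun e => Real.exp (η * Gn r b n e)) (fun e => Real.exp_pos _)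
    (fun i => r ⟨n, hn⟩ (transcriptPrefix b ⟨n, hn⟩) i)
    (fun i => ⟨(hr ⟨n, hn⟩ _ i).1, (hr ⟨n, hn⟩ _ i).2⟩)
  rw [trans1]
  have step2 : ∑ v : A,
      playOf (sigmaEW A T η) r ⟨n, hn⟩ (transcriptPrefix b ⟨n, hn⟩) v *
      (∑ e : Ex T A, Real.exp (η * Gn r b n e) * (if awake e ⟨n, hn⟩ then
        Real.exp (η * (r ⟨n, hn⟩ (transcriptPrefix b ⟨n, hn⟩) v
          - r ⟨n, hn⟩ (transcriptPrefix b ⟨n, hn⟩) e.2.2)) else 1))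
      ≤ Real.exp (2 * η ^ 2) * ∑ e : Ex T A, Real.exp (η * Gn r b n e) := by
    rw [Finset.sum_congr rfl (fun v _ => by rw [hxform v])]
    exact hcore
  calc Pn r η b n * ∑ v : A,
      playOf (sigmaEW A T η) r ⟨n, hn⟩ (transcriptPrefix b ⟨n, hn⟩) v *
      (∑ e : Ex T A, Real.exp (η * Gn r b n e) * (if awake e ⟨n, hn⟩ then
        Real.exp (η * (r ⟨n, hn⟩ (transcriptPrefix b ⟨n, hn⟩) v
          - r ⟨n, hn⟩ (transcriptPrefix b ⟨n, hn⟩) e.2.2)) else 1))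
      ≤ Pn r η b n * (Real.exp (2 * η ^ 2) * ∑ e : Ex T A, Real.exp (η * Gn r b n e)) :=
        mul_le_mul_of_nonneg_left step2 (Pn_nonneg r η b n)
    _ = Real.exp (2 * η ^ 2) *
        (Pn r η b n * ∑ e : Ex T A, Real.exp (η * Gn r b n e)) := by ring


omit [Nonempty A] in
lemma Gn_zero (a : Fin T → A) (e : Ex T A) : Gn r a 0 e = 0 := by
  refine Finset.sum_eq_zero fun t _ => ?_
  rw [if_neg]
  rintro ⟨h, -⟩
  exact Nat.not_lt_zero _ h

omit [Nonempty A] in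
lemma Pn_zero (η : ℝ) (a : Fin T → A) : Pn r η a 0 = 1 := by
  refine Finset.prod_eq_one fun t _ => ?_
  rw [if_neg (Nat.not_lt_zero _)]

lemma card_fun_real : ((Fintype.card (Fin T → A) : ℕ) : ℝ) = (Fintype.card A : ℝ) ^ T := by
  rw [Fintype.card_fun, Fintype.card_fin]
  push_cast
  ring

lemma mass_all (η : ℝ) : ∀ n : ℕ, n ≤ T →
    ∑ a : Fin T → A, Pn r η a n = (Fintype.card A : ℝ) ^ (T - n) := by
  intro n
  induction n with
  | zero =>
    intro _
    rw [Finset.sum_congr rfl (fun a _ => Pn_zero r η a), Finset.sum_const, Finset.card_univ,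
      nsmul_eq_mul, mul_one, Nat.sub_zero, card_fun_real]
  | succ n ih =>
    intro h
    have hn : n < T := Nat.lt_of_succ_le h
    have hN : (0:ℝ) < (Fintype.card A : ℝ) := by
      exact_mod_cast Fintype.card_pos
    have hsplit : ∑ a : Fin T → A, Pn r η a n
        = ∑ q : {j : Fin T // j ≠ (⟨n, hn⟩ : Fin T)} → A, (Fintype.card A : ℝ) *
            Pn r η ((Equiv.funSplitAt (⟨n, hn⟩ : Fin T) A).symm (Classical.arbitrary A, q)) n := by
      rw [split_sum (⟨n, hn⟩ : Fin T) (fun a => Pn r η a n)]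
      refine Finset.sum_congr rfl fun q _ => ?_
      have hcongr : ∀ v : A, v ∈ Finset.univ →
          Pn r η ((Equiv.funSplitAt (⟨n, hn⟩ : Fin T) A).symm (v, q)) n
          = Pn r η ((Equiv.funSplitAt (⟨n, hn⟩ : Fin T) A).symm (Classical.arbitrary A, q)) n :=
        fun v _ => Pn_congr r η (fun t ht => aOf_agree _ q v _ (lt_ne_tau hn ht))
      rw [Finset.sum_congr rfl hcongr, Finset.sum_const, Finset.card_univ, nsmul_eq_mul]
    have e1 : (Fintype.card A : ℝ) *
        (∑ q : {j : Fin T // j ≠ (⟨n, hn⟩ : Fin T)} → A,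
          Pn r η ((Equiv.funSplitAt (⟨n, hn⟩ : Fin T) A).symm (Classical.arbitrary A, q)) n)
        = (Fintype.card A : ℝ) ^ (T - n) := by
      rw [← ih (le_of_lt hn), hsplit, Finset.mul_sum]
    have hpow : (Fintype.card A : ℝ) ^ (T - n)
        = (Fintype.card A : ℝ) ^ (T - (n+1)) * (Fintype.card A : ℝ) := by
      rw [← pow_succ]
      congr 1
      omega
    rw [split_sum (⟨n, hn⟩ : Fin T) (fun a => Pn r η a (n+1)),
      Finset.sum_congr rfl (fun q _ => step_mass r η hn q)]
    refine mul_left_cancel₀ hN.ne' ?_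
    rw [e1, hpow]
    ring

lemma pot_all (η : ℝ) (hη0 : 0 ≤ η) (hη1 : η ≤ 1)
    (hr : ∀ t h j, r t h j ∈ Set.Icc (0:ℝ) 1) :
    ∀ n : ℕ, n ≤ T →
      ∑ a : Fin T → A, Pn r η a n * (∑ e : Ex T A, Real.exp (η * Gn r a n e))
        ≤ (Fintype.card A : ℝ) ^ (T - n) * (Fintype.card (Ex T A) : ℝ)
            * Real.exp (2 * η ^ 2 * n) := by
  intro n
  induction n with
  | zero =>
    intro _
    have hz : ∀ a : Fin T → A, Pn r η a 0 * (∑ e : Ex T A, Real.exp (η * Gn r a 0 e))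
        = (Fintype.card (Ex T A) : ℝ) := by
      intro a
      rw [Pn_zero, one_mul,
        Finset.sum_congr rfl (fun e _ => by rw [Gn_zero, mul_zero, Real.exp_zero]),
        Finset.sum_const, Finset.card_univ, nsmul_eq_mul, mul_one]
    rw [Finset.sum_congr rfl (fun a _ => hz a), Finset.sum_const, Finset.card_univ,
      nsmul_eq_mul, Nat.cast_zero, mul_zero, Real.exp_zero, mul_one, Nat.sub_zero,
      card_fun_real]
  | succ n ih =>
    intro h
    have hn : n < T := Nat.lt_of_succ_le h
    have hN : (0:ℝ) < (Fintype.card A : ℝ) := by exact_mod_cast Fintype.card_pos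
    -- split the `n`-sum
    have hsplit : ∑ a : Fin T → A, Pn r η a n * (∑ e : Ex T A, Real.exp (η * Gn r a n e))
        = ∑ q : {j : Fin T // j ≠ (⟨n, hn⟩ : Fin T)} → A, (Fintype.card A : ℝ) *
            (Pn r η ((Equiv.funSplitAt (⟨n, hn⟩ : Fin T) A).symm (Classical.arbitrary A, q)) n *
              (∑ e : Ex T A, Real.exp (η *
                Gn r ((Equiv.funSplitAt (⟨n, hn⟩ : Fin T) A).symm (Classical.arbitrary A, q)) n e))) := by
      rw [split_sum (⟨n, hn⟩ : Fin T)
        (fun a => Pn r η a n * (∑ e : Ex T A, Real.exp (η * Gn r a n e)))]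
      refine Finset.sum_congr rfl fun q _ => ?_
      have hcongr : ∀ v : A, v ∈ Finset.univ →
          Pn r η ((Equiv.funSplitAt (⟨n, hn⟩ : Fin T) A).symm (v, q)) n *
            (∑ e : Ex T A, Real.exp (η *
              Gn r ((Equiv.funSplitAt (⟨n, hn⟩ : Fin T) A).symm (v, q)) n e))
          = Pn r η ((Equiv.funSplitAt (⟨n, hn⟩ : Fin T) A).symm (Classical.arbitrary A, q)) n *
            (∑ e : Ex T A, Real.exp (η *
              Gn r ((Equiv.funSplitAt (⟨n, hn⟩ : Fin T) A).symm (Classical.arbitrary A, q)) n e)) := by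
        intro v _
        have hag : ∀ t : Fin T, t.1 < n →
            (Equiv.funSplitAt (⟨n, hn⟩ : Fin T) A).symm (v, q) t
              = (Equiv.funSplitAt (⟨n, hn⟩ : Fin T) A).symm (Classical.arbitrary A, q) t :=
          fun t ht => aOf_agree _ q v _ (lt_ne_tau hn ht)
        rw [Pn_congr r η hag,
          Finset.sum_congr rfl (fun e _ => by rw [Gn_congr r hag e])]
      rw [Finset.sum_congr rfl hcongr, Finset.sum_const, Finset.card_univ, nsmul_eq_mul]
    have hQnn : 0 ≤ ∑ q : {j : Fin T // j ≠ (⟨n, hn⟩ : Fin T)} → A,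
        (Pn r η ((Equiv.funSplitAt (⟨n, hn⟩ : Fin T) A).symm (Classical.arbitrary A, q)) n *
          (∑ e : Ex T A, Real.exp (η *
            Gn r ((Equiv.funSplitAt (⟨n, hn⟩ : Fin T) A).symm (Classical.arbitrary A, q)) n e))) :=
      Finset.sum_nonneg fun q _ => mul_nonneg (Pn_nonneg r η _ n)
        (Finset.sum_nonneg fun e _ => (Real.exp_pos _).le)
    have e1 : (Fintype.card A : ℝ) *
        ∑ q : {j : Fin T // j ≠ (⟨n, hn⟩ : Fin T)} → A,
          (Pn r η ((Equiv.funSplitAt (⟨n, hn⟩ : Fin T) A).symm (Classical.arbitrary A, q)) n *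
            (∑ e : Ex T A, Real.exp (η *
              Gn r ((Equiv.funSplitAt (⟨n, hn⟩ : Fin T) A).symm (Classical.arbitrary A, q)) n e)))
        ≤ (Fintype.card A : ℝ) ^ (T - n) * (Fintype.card (Ex T A) : ℝ)
            * Real.exp (2 * η ^ 2 * n) := by
      rw [← Finset.mul_sum] at hsplit
      rw [← hsplit]
      exact ih (le_of_lt hn)
    calc ∑ a : Fin T → A, Pn r η a (n+1) * (∑ e : Ex T A, Real.exp (η * Gn r a (n+1) e))
        = ∑ q : {j : Fin T // j ≠ (⟨n, hn⟩ : Fin T)} → A,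
            ∑ v : A, Pn r η ((Equiv.funSplitAt (⟨n, hn⟩ : Fin T) A).symm (v, q)) (n + 1) *
              (∑ e : Ex T A, Real.exp (η *
                Gn r ((Equiv.funSplitAt (⟨n, hn⟩ : Fin T) A).symm (v, q)) (n + 1) e)) :=
          split_sum (⟨n, hn⟩ : Fin T) _
      _ ≤ ∑ q : {j : Fin T // j ≠ (⟨n, hn⟩ : Fin T)} → A, Real.exp (2 * η ^ 2) *
            (Pn r η ((Equiv.funSplitAt (⟨n, hn⟩ : Fin T) A).symm (Classical.arbitrary A, q)) n *
              (∑ e : Ex T A, Real.exp (η *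
                Gn r ((Equiv.funSplitAt (⟨n, hn⟩ : Fin T) A).symm (Classical.arbitrary A, q)) n e))) :=
          Finset.sum_le_sum fun q _ => step_pot r η hη0 hη1 hr hn q
      _ = Real.exp (2 * η ^ 2) *
            ∑ q : {j : Fin T // j ≠ (⟨n, hn⟩ : Fin T)} → A,
              (Pn r η ((Equiv.funSplitAt (⟨n, hn⟩ : Fin T) A).symm (Classical.arbitrary A, q)) n *
                (∑ e : Ex T A, Real.exp (η *
                  Gn r ((Equiv.funSplitAt (⟨n, hn⟩ : Fin T) A).symm (Classical.arbitrary A, q)) n e))) := by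
          rw [Finset.mul_sum]
      _ ≤ Real.exp (2 * η ^ 2) *
            ((Fintype.card A : ℝ) ^ (T - (n+1)) * (Fintype.card (Ex T A) : ℝ)
              * Real.exp (2 * η ^ 2 * n)) := by
          refine mul_le_mul_of_nonneg_left ?_ (Real.exp_pos _).le
          refine le_of_mul_le_mul_left ?_ hN
          have hpow : (Fintype.card A : ℝ) ^ (T - n)
              = (Fintype.card A : ℝ) ^ (T - (n+1)) * (Fintype.card A : ℝ) := by
            rw [← pow_succ]
            congr 1
            omega
          calc (Fintype.card A : ℝ) *
              ∑ q : {j : Fin T // j ≠ (⟨n, hn⟩ : Fin T)} → A,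
                (Pn r η ((Equiv.funSplitAt (⟨n, hn⟩ : Fin T) A).symm (Classical.arbitrary A, q)) n *
                  (∑ e : Ex T A, Real.exp (η *
                    Gn r ((Equiv.funSplitAt (⟨n, hn⟩ : Fin T) A).symm (Classical.arbitrary A, q)) n e)))
              ≤ (Fintype.card A : ℝ) ^ (T - n) * (Fintype.card (Ex T A) : ℝ)
                  * Real.exp (2 * η ^ 2 * n) := e1
            _ = (Fintype.card A : ℝ) *
                ((Fintype.card A : ℝ) ^ (T - (n+1)) * (Fintype.card (Ex T A) : ℝ)
                  * Real.exp (2 * η ^ 2 * n)) := by rw [hpow]; ring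
      _ = (Fintype.card A : ℝ) ^ (T - (n+1)) * (Fintype.card (Ex T A) : ℝ)
            * Real.exp (2 * η ^ 2 * ((n+1 : ℕ) : ℝ)) := by
          rw [show Real.exp (2 * η ^ 2 * ((n+1 : ℕ) : ℝ))
              = Real.exp (2 * η ^ 2) * Real.exp (2 * η ^ 2 * (n : ℝ)) from by
            rw [← Real.exp_add]; congr 1; push_cast; ring]
          ring


lemma Phi_pos (η : ℝ) (a : Fin T → A) (hT1 : 0 < T) :
    0 < ∑ e : Ex T A, Real.exp (η * Gn r a T e) := by
  have : Nonempty (Ex T A) := ⟨(⟨0, hT1⟩, ⟨0, hT1⟩, Classical.arbitrary A)⟩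
  exact Finset.sum_pos (fun e _ => Real.exp_pos _) Finset.univ_nonempty

lemma Phi_ge_one (η : ℝ) (a : Fin T → A) (hT1 : 0 < T) :
    1 ≤ ∑ e : Ex T A, Real.exp (η * Gn r a T e) := by
  set t₀ : Fin T := ⟨0, hT1⟩ with ht₀
  have hzero : Gn r a T (t₀, t₀, a t₀) = 0 := by
    refine Finset.sum_eq_zero fun t _ => ?_
    by_cases h : t.1 < T ∧ awake (t₀, t₀, a t₀) t
    · have ht : t = t₀ := le_antisymm h.2.2 h.2.1
      rw [if_pos h, ht, sub_self]
    · rw [if_neg h]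
  have h1 : Real.exp (η * Gn r a T (t₀, t₀, a t₀))
      ≤ ∑ e : Ex T A, Real.exp (η * Gn r a T e) :=
    Finset.single_le_sum (f := fun e : Ex T A => Real.exp (η * Gn r a T e))
      (fun e _ => (Real.exp_pos _).le) (Finset.mem_univ _)
  rw [hzero, mul_zero, Real.exp_zero] at h1
  exact h1

lemma regret_le (η : ℝ) (hη : 0 < η) (a : Fin T → A) (hT1 : 0 < T) :
    adaptiveRegret r a ≤ Real.log (∑ e : Ex T A, Real.exp (η * Gn r a T e)) / η := by
  have hΦ1 := Phi_ge_one r η a hT1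
  have hΦpos := Phi_pos r η a hT1
  refine Real.sSup_le ?_ (div_nonneg (Real.log_nonneg hΦ1) hη.le)
  rintro v ⟨t₁, t₂, h12, j, rfl⟩
  have hv : (∑ t : Fin T, if t₁ ≤ t ∧ t ≤ t₂ then
      r t (transcriptPrefix a t) (a t) - r t (transcriptPrefix a t) j else 0)
      = Gn r a T (t₁, t₂, j) := by
    refine Finset.sum_congr rfl fun t _ => ?_
    by_cases h : t₁ ≤ t ∧ t ≤ t₂
    · rw [if_pos h, if_pos ⟨t.2, h⟩]
    · rw [if_neg h, if_neg (fun hc => h hc.2)]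
  rw [hv, le_div_iff₀ hη]
  have h1 : Real.exp (η * Gn r a T (t₁, t₂, j))
      ≤ ∑ e : Ex T A, Real.exp (η * Gn r a T e) :=
    Finset.single_le_sum (f := fun e : Ex T A => Real.exp (η * Gn r a T e))
      (fun e _ => (Real.exp_pos _).le) (Finset.mem_univ _)
  have h2 := (Real.le_log_iff_exp_le hΦpos).mpr h1
  linarith [h2]

lemma prob_eq_Pn (η : ℝ) (a : Fin T → A) :
    transcriptProb (playOf (sigmaEW A T η) r) a = Pn r η a T := by
  unfold transcriptProb Pn
  exact Finset.prod_congr rfl fun t _ => (if_pos t.2).symm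

lemma prob_nonneg (η : ℝ) (a : Fin T → A) :
    0 ≤ transcriptProb (playOf (sigmaEW A T η) r) a := by
  rw [prob_eq_Pn]
  exact Pn_nonneg r η a T

lemma cardEx_real : ((Fintype.card (Ex T A) : ℕ) : ℝ) = (Fintype.card A : ℝ) * (T:ℝ)^2 := by
  simp [Fintype.card_prod, Fintype.card_fin]
  push_cast
  ring

end AdaptiveAux

set_option maxHeartbeats 1000000 in
open AdaptiveAux in
/-- In the experts setting with `T ≥ ln(|A|·T²)`, there exists an
algorithm for the Learner guaranteeing, against any adaptive Adversary, expected adaptive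
regret `E[R^T_adaptive] ≤ 4√(T(ln|A| + 2 ln T))`. -/
theorem adaptive_regret_bound
    (A : Type) [Fintype A] [Nonempty A] (T : ℕ)
    (hT : Real.log ((Fintype.card A) * T ^ 2) ≤ T) :
    ∃ σ : ExpertStrategy A T,
      (∀ t h past, (∀ j, 0 ≤ σ t h past j) ∧ ∑ j, σ t h past j = 1) ∧
      ∀ r : ∀ t : Fin T, (Fin t.1 → A) → A → ℝ,
        (∀ t h j, r t h j ∈ Set.Icc (0 : ℝ) 1) →
        ∑ a : Fin T → A, transcriptProb (playOf σ r) a * adaptiveRegret r a ≤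
          4 * Real.sqrt (T * (Real.log (Fintype.card A) + 2 * Real.log T)) := by
  classical
  set L : ℝ := Real.log ((Fintype.card A) * T ^ 2) with hLdef
  set η : ℝ := Real.sqrt ((T:ℝ) * L) / (T:ℝ) with hηdef
  refine ⟨sigmaEW A T η, fun t h past => sigmaEW_dist η t h past, ?_⟩
  intro r hr
  rcases Nat.eq_zero_or_pos T with hT0 | hT1
  · -- T = 0 : no rounds, regret is sSup ∅ = 0
    subst hT0
    have hreg : ∀ a : Fin 0 → A, adaptiveRegret r a = 0 := by
      intro a
      have hset : {v : ℝ | ∃ t₁ t₂ : Fin 0, t₁ ≤ t₂ ∧ ∃ j : A,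
          v = ∑ t, if t₁ ≤ t ∧ t ≤ t₂ then
            r t (transcriptPrefix a t) (a t) - r t (transcriptPrefix a t) j else 0} = ∅ := by
        ext v
        simp only [Set.mem_setOf_eq, Set.mem_empty_iff_false, iff_false]
        rintro ⟨t₁, -⟩
        exact Fin.elim0 t₁
      unfold adaptiveRegret
      rw [hset, Real.sSup_empty]
    rw [Finset.sum_congr rfl (fun a _ => by rw [hreg a, mul_zero]), Finset.sum_const_zero]
    positivity
  by_cases hN1 : Fintype.card A = 1
  · -- only one action: all regrets vanish
    obtain ⟨x₀, hx₀⟩ := Fintype.card_eq_one_iff.mp hN1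
    have hreg : ∀ a : Fin T → A, adaptiveRegret r a ≤ 0 := by
      intro a
      refine Real.sSup_le ?_ le_rfl
      rintro v ⟨t₁, t₂, h12, j, rfl⟩
      have hz : ∀ t : Fin T, (if t₁ ≤ t ∧ t ≤ t₂ then
          r t (transcriptPrefix a t) (a t) - r t (transcriptPrefix a t) j else 0) = 0 := by
        intro t
        have hja : j = a t := by rw [hx₀ j, hx₀ (a t)]
        by_cases h : t₁ ≤ t ∧ t ≤ t₂
        · rw [if_pos h, hja, sub_self]
        · rw [if_neg h]
      rw [Finset.sum_congr rfl (fun t _ => hz t), Finset.sum_const_zero]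
    have hle0 : ∑ a : Fin T → A,
        transcriptProb (playOf (sigmaEW A T η) r) a * adaptiveRegret r a ≤ 0 :=
      Finset.sum_nonpos fun a _ =>
        mul_nonpos_iff.mpr (Or.inl ⟨prob_nonneg r η a, hreg a⟩)
    refine le_trans hle0 ?_
    positivity
  -- main case
  have hN2 : 2 ≤ Fintype.card A := by
    have := Fintype.card_pos (α := A); omega
  have hTR : (1:ℝ) ≤ (T:ℝ) := by exact_mod_cast hT1
  have hT0R : (0:ℝ) < (T:ℝ) := by exact_mod_cast hT1
  have hTne : (T:ℝ) ≠ 0 := hT0R.ne'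
  have hNR : (2:ℝ) ≤ (Fintype.card A : ℝ) := by exact_mod_cast hN2
  have hM1 : (1:ℝ) < (Fintype.card A : ℝ) * (T:ℝ)^2 := by nlinarith
  have hL0 : 0 < L := by rw [hLdef]; exact Real.log_pos hM1
  have hLT : L ≤ (T:ℝ) := by rw [hLdef]; exact hT
  have hTL0 : (0:ℝ) ≤ (T:ℝ) * L := mul_nonneg hT0R.le hL0.le
  set s : ℝ := Real.sqrt ((T:ℝ) * L) with hsdef
  have hs0 : 0 < s := Real.sqrt_pos.mpr (mul_pos hT0R hL0)
  have hs2 : s^2 = (T:ℝ) * L := Real.sq_sqrt hTL0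
  have hη0 : 0 < η := by rw [hηdef]; exact div_pos hs0 hT0R
  have hηle : η ≤ 1 := by
    rw [hηdef, div_le_one hT0R]
    have h1 : (T:ℝ) * L ≤ (T:ℝ)^2 := by nlinarith
    have h2 := Real.sqrt_le_sqrt h1
    rwa [Real.sqrt_sq hT0R.le] at h2
  have hη2 : η^2 = L / (T:ℝ) := by
    rw [hηdef, div_pow, hs2, pow_two, mul_div_mul_left _ _ hTne]
  have hmass := mass_all r η T le_rfl
  rw [Nat.sub_self, pow_zero] at hmass
  have hpot := pot_all r η hη0.le hηle hr T le_rfl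
  rw [Nat.sub_self, pow_zero, one_mul] at hpot
  have hProbPn : ∀ a : Fin T → A,
      transcriptProb (playOf (sigmaEW A T η) r) a = Pn r η a T := prob_eq_Pn r η
  have hPnn : ∀ a : Fin T → A, 0 ≤ Pn r η a T := fun a => Pn_nonneg r η a T
  have hPhipos : ∀ a : Fin T → A,
      0 < ∑ e : Ex T A, Real.exp (η * Gn r a T e) := fun a => Phi_pos r η a hT1
  have step1 : ∑ a : Fin T → A,
      transcriptProb (playOf (sigmaEW A T η) r) a * adaptiveRegret r a
      ≤ ∑ a : Fin T → A, Pn r η a T *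
          (Real.log (∑ e : Ex T A, Real.exp (η * Gn r a T e)) / η) := by
    refine Finset.sum_le_sum fun a _ => ?_
    rw [hProbPn a]
    exact mul_le_mul_of_nonneg_left (regret_le r η hη0 a hT1) (hPnn a)
  have step2 : ∑ a : Fin T → A, Pn r η a T *
      (Real.log (∑ e : Ex T A, Real.exp (η * Gn r a T e)) / η)
      = (∑ a : Fin T → A, Pn r η a T *
          Real.log (∑ e : Ex T A, Real.exp (η * Gn r a T e))) / η := by
    rw [Finset.sum_div]
    exact Finset.sum_congr rfl fun a _ => (mul_div_assoc _ _ _).symm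
  have jensen : ∑ a : Fin T → A, Pn r η a T *
      Real.log (∑ e : Ex T A, Real.exp (η * Gn r a T e))
      ≤ Real.log (∑ a : Fin T → A, Pn r η a T *
          (∑ e : Ex T A, Real.exp (η * Gn r a T e))) := by
    have hcc := strictConcaveOn_log_Ioi.concaveOn
    have := hcc.le_map_sum (t := Finset.univ) (w := fun a : Fin T → A => Pn r η a T)
      (p := fun a : Fin T → A => ∑ e : Ex T A, Real.exp (η * Gn r a T e))
      (fun a _ => hPnn a) hmass (fun a _ => hPhipos a)
    simpa [smul_eq_mul] using this
  have hsumpos : 0 < ∑ a : Fin T → A, Pn r η a T *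
      (∑ e : Ex T A, Real.exp (η * Gn r a T e)) := by
    have hex : ∃ a : Fin T → A, 0 < Pn r η a T := by
      by_contra hc
      push_neg at hc
      have : ∑ a : Fin T → A, Pn r η a T ≤ 0 := Finset.sum_nonpos fun a _ => hc a
      rw [hmass] at this
      linarith
    obtain ⟨a₀, ha₀⟩ := hex
    exact Finset.sum_pos' (fun a _ => mul_nonneg (hPnn a) (hPhipos a).le)
      ⟨a₀, Finset.mem_univ _, mul_pos ha₀ (hPhipos a₀)⟩
  have hExNe : Nonempty (Ex T A) := ⟨(⟨0, hT1⟩, ⟨0, hT1⟩, Classical.arbitrary A)⟩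
  have hcardEx0 : (0:ℝ) < ((Fintype.card (Ex T A) : ℕ) : ℝ) := by
    exact_mod_cast Fintype.card_pos
  have logle : Real.log (∑ a : Fin T → A, Pn r η a T *
      (∑ e : Ex T A, Real.exp (η * Gn r a T e)))
      ≤ Real.log ((Fintype.card (Ex T A) : ℝ) * Real.exp (2 * η^2 * (T:ℝ))) :=
    (Real.log_le_log_iff hsumpos (by positivity)).mpr hpot
  have logrhs : Real.log ((Fintype.card (Ex T A) : ℝ) * Real.exp (2 * η^2 * (T:ℝ)))
      = L + 2 * η^2 * (T:ℝ) := by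
    rw [Real.log_mul hcardEx0.ne' (Real.exp_ne_zero _), Real.log_exp, cardEx_real, hLdef]
  have hLsplit : L = Real.log (Fintype.card A) + 2 * Real.log (T:ℝ) := by
    rw [hLdef, Real.log_mul (by positivity) (by positivity), Real.log_pow]
    push_cast
    ring
  have hkey : (L + 2 * η^2 * (T:ℝ)) / η = 3 * s := by
    have h1 : L + 2 * η^2 * (T:ℝ) = 3 * L := by
      rw [hη2]
      field_simp
      ring
    rw [h1, hηdef, div_div_eq_mul_div, div_eq_iff hs0.ne']
    linear_combination (-3) * hs2
  have hRHSs : Real.sqrt ((T:ℝ) * (Real.log (Fintype.card A) + 2 * Real.log (T:ℝ))) = s := by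
    rw [hsdef, hLsplit]
  calc ∑ a : Fin T → A, transcriptProb (playOf (sigmaEW A T η) r) a * adaptiveRegret r a
      ≤ ∑ a : Fin T → A, Pn r η a T *
          (Real.log (∑ e : Ex T A, Real.exp (η * Gn r a T e)) / η) := step1
    _ = (∑ a : Fin T → A, Pn r η a T *
          Real.log (∑ e : Ex T A, Real.exp (η * Gn r a T e))) / η := step2
    _ ≤ Real.log (∑ a : Fin T → A, Pn r η a T *
          (∑ e : Ex T A, Real.exp (η * Gn r a T e))) / η :=
        (div_le_div_iff_of_pos_right hη0).mpr jensen
    _ ≤ (L + 2 * η^2 * (T:ℝ)) / η := by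
        rw [← logrhs]
        exact (div_le_div_iff_of_pos_right hη0).mpr logle
    _ = 3 * s := hkey
    _ ≤ 4 * s := by linarith
    _ = 4 * Real.sqrt ((T:ℝ) * (Real.log (Fintype.card A) + 2 * Real.log (T:ℝ))) := by
        rw [hRHSs]

end
end

section
/- In the sleeping experts setting with finite action set A and T ≥ ln|A|, there exists an algorithm for the Learner (playing at each round a distribution over the currently awake actions A^t) guaranteeing, against any adaptive Adversary, expected sleeping experts regret E[R^T_sleeping] ≤ 4·√(T·ln|A|). -/
open scoped BigOperators

noncomputable section

/-- A learner's algorithm in the sleeping experts setting: at round `t` it maps the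
realized history, the past loss vectors, and the past and current sets of awake experts
to a distribution over actions. -/
def SleepingStrategy (A : Type) (T : ℕ) : Type :=
  ∀ t : Fin T, (Fin t.1 → A) →            -- realized history
    (Fin t.1 → A → ℝ) →                   -- past loss vectors
    (Fin t.1 → Finset A) →                -- past sets of awake experts
    Finset A →                            -- current set of awake experts A^t
    A → ℝ

/-- The per-round play induced by a strategy `σ` against the adaptive Adversary
`(Av, r)`. -/
noncomputable def sleepingPlay {A : Type} {T : ℕ} (σ : SleepingStrategy A T)
    (Av : ∀ t : Fin T, (Fin t.1 → A) → Finset A)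
    (r : ∀ t : Fin T, (Fin t.1 → A) → A → ℝ)
    (t : Fin T) (h : Fin t.1 → A) : A → ℝ :=
  σ t h (fun s => r ⟨s.1, s.2.trans t.2⟩ (historyPrefix h s))
    (fun s => Av ⟨s.1, s.2.trans t.2⟩ (historyPrefix h s))
    (Av t h)

/-!
The Learner runs exponential weights on the sleeping regrets: at each round it plays the awake
experts with probabilities proportional to `exp (η R_j)`, where `R_j` is the regret accumulated
so far against `j` on the rounds where `j` was awake. Against these weights the Learner's
expected instantaneous regret is exactly zero, so `exp y ≤ 1 + y + y²` shows that the potential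
`∑ j, exp (η R_j)` grows in expectation by a factor at most `1 + η²` per round. Taking
logarithms, `E[max_j R_j] ≤ (log |A| + T η²) / η`, which is `2 √(T log |A|)` for
`η = √(log |A| / T)`.
-/

open Finset Real

theorem exp_le_one_add_add_sq {x : ℝ} (hx : |x| ≤ 1) : exp x ≤ 1 + x + x ^ 2 := by
  have h := abs_le.mp (Real.exp_bound hx (n := 2) two_pos)
  norm_num [Finset.sum_range_succ, Nat.factorial, sq_abs] at h
  nlinarith [sq_nonneg x]

section AwakeDistribution

variable {A : Type} [Fintype A] [DecidableEq A] {C : Finset A} {w : A → ℝ}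

def awakeNormalize (C : Finset A) (w : A → ℝ) (j : A) : ℝ :=
  if j ∈ C then w j / ∑ i ∈ C, w i else 0

def awakeRegret (C : Finset A) (ρ : A → ℝ) (b j : A) : ℝ :=
  if j ∈ C then ρ b - ρ j else 0

omit [Fintype A] in
theorem awakeNormalize_nonneg (hw : ∀ j ∈ C, 0 ≤ w j) (j : A) : 0 ≤ awakeNormalize C w j := by
  unfold awakeNormalize
  split_ifs with hj
  · exact div_nonneg (hw j hj) (sum_nonneg hw)
  · exact le_rfl

omit [Fintype A] in
theorem awakeNormalize_of_notMem {j : A} (hj : j ∉ C) : awakeNormalize C w j = 0 :=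
  if_neg hj

theorem sum_awakeNormalize (hC : C.Nonempty) (hw : ∀ j ∈ C, 0 < w j) :
    ∑ j, awakeNormalize C w j = 1 := by
  simp only [awakeNormalize, sum_ite_mem, univ_inter, ← sum_div]
  exact div_self (sum_pos hw hC).ne'

omit [Fintype A] in
theorem abs_awakeRegret_le_one {ρ : A → ℝ} (hρ : ∀ j, ρ j ∈ Set.Icc (0 : ℝ) 1) (b j : A) :
    |awakeRegret C ρ b j| ≤ 1 := by
  unfold awakeRegret
  split_ifs
  · obtain ⟨hb0, hb1⟩ := hρ b
    obtain ⟨hj0, hj1⟩ := hρ j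
    exact abs_le.mpr ⟨by linarith, by linarith⟩
  · simp

/-- The fixed-point property of exponential weights. -/
theorem sum_awakeNormalize_mul_sum_awakeRegret (hC : C.Nonempty) (hw : ∀ j ∈ C, 0 < w j)
    (ρ : A → ℝ) :
    ∑ b, awakeNormalize C w b * ∑ j, w j * awakeRegret C ρ b j = 0 := by
  have hZ : (∑ i ∈ C, w i) ≠ 0 := (sum_pos hw hC).ne'
  have hrow : ∀ b, ∑ j, w j * awakeRegret C ρ b j
      = (∑ i ∈ C, w i) * ρ b - ∑ i ∈ C, w i * ρ i := by
    intro b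
    simp only [awakeRegret, mul_ite, mul_zero, sum_ite_mem, univ_inter, mul_sub,
      sum_sub_distrib, ← sum_mul]
  have hmean : ∑ b, awakeNormalize C w b * ρ b = (∑ i ∈ C, w i * ρ i) / ∑ i ∈ C, w i := by
    simp only [awakeNormalize, ite_mul, zero_mul, sum_ite_mem, univ_inter,
      div_mul_eq_mul_div, ← sum_div]
  calc ∑ b, awakeNormalize C w b * ∑ j, w j * awakeRegret C ρ b j
      = (∑ i ∈ C, w i) * ∑ b, awakeNormalize C w b * ρ b
          - (∑ i ∈ C, w i * ρ i) * ∑ b, awakeNormalize C w b := by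
        simp only [hrow, mul_sum, ← sum_sub_distrib]
        exact sum_congr rfl fun b _ => by ring
    _ = 0 := by
        rw [hmean, sum_awakeNormalize hC hw, mul_div_cancel₀ _ hZ, mul_one, sub_self]

theorem sum_awakeNormalize_mul_sum_exp_le (hC : C.Nonempty) (hw : ∀ j, 0 < w j)
    {ρ : A → ℝ} (hρ : ∀ j, ρ j ∈ Set.Icc (0 : ℝ) 1) {η : ℝ} (hη0 : 0 ≤ η) (hη1 : η ≤ 1) :
    ∑ b, awakeNormalize C w b * ∑ j, w j * exp (η * awakeRegret C ρ b j)
      ≤ (1 + η ^ 2) * ∑ j, w j := by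
  have hexp : ∀ b j, exp (η * awakeRegret C ρ b j) ≤ 1 + η ^ 2 + η * awakeRegret C ρ b j := by
    intro b j
    have hg := abs_awakeRegret_le_one (C := C) hρ b j
    have hηg : |η * awakeRegret C ρ b j| ≤ 1 := by
      rw [abs_mul, abs_of_nonneg hη0]
      nlinarith [abs_nonneg (awakeRegret C ρ b j)]
    have hsq : (η * awakeRegret C ρ b j) ^ 2 ≤ η ^ 2 := by
      rw [mul_pow]
      exact mul_le_of_le_one_right (sq_nonneg η) ((sq_le_one_iff_abs_le_one _).mpr hg)
    linarith [exp_le_one_add_add_sq hηg]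
  calc ∑ b, awakeNormalize C w b * ∑ j, w j * exp (η * awakeRegret C ρ b j)
      ≤ ∑ b, awakeNormalize C w b * ∑ j, w j * (1 + η ^ 2 + η * awakeRegret C ρ b j) := by
        gcongr with b _ j _
        · exact awakeNormalize_nonneg (fun j _ => (hw j).le) b
        · exact (hw j).le
        · exact hexp b j
    _ = ∑ b, ((1 + η ^ 2) * (∑ j, w j) * awakeNormalize C w b
          + η * (awakeNormalize C w b * ∑ j, w j * awakeRegret C ρ b j)) := by
        refine sum_congr rfl fun b _ => ?_
        simp only [mul_sum, sum_mul, ← sum_add_distrib]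
        exact sum_congr rfl fun j _ => by ring
    _ = (1 + η ^ 2) * (∑ j, w j) * ∑ b, awakeNormalize C w b
          + η * ∑ b, awakeNormalize C w b * ∑ j, w j * awakeRegret C ρ b j := by
        rw [sum_add_distrib, ← mul_sum, ← mul_sum]
    _ = (1 + η ^ 2) * ∑ j, w j := by
        rw [sum_awakeNormalize hC (fun j _ => hw j),
          sum_awakeNormalize_mul_sum_awakeRegret hC (fun j _ => hw j)]
        ring

end AwakeDistribution

theorem Fintype.sum_sum_update_eq_card_mul {ι A M : Type*} [Fintype ι] [DecidableEq ι] [Fintype A]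
    [AddCommMonoid M] (i : ι) (f : (ι → A) → M) :
    ∑ a, ∑ b, f (Function.update a i b) = Fintype.card A • ∑ a, f a := by
  have hinv : Function.Involutive fun x : (ι → A) × A => (Function.update x.1 i x.2, x.1 i) :=
    fun ⟨a, b⟩ => by simp
  calc ∑ a, ∑ b, f (Function.update a i b)
        = ∑ x : (ι → A) × A, f (hinv.toPerm _ x).1 := by
          rw [Fintype.sum_prod_type]; rfl
    _ = ∑ x : (ι → A) × A, f x.1 := Equiv.sum_comp (hinv.toPerm _) (fun x => f x.1)
    _ = Fintype.card A • ∑ a, f a := by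
        rw [Fintype.sum_prod_type, smul_sum]
        simp

section AdaptiveSampling

variable {A : Type} [Fintype A] {T : ℕ}

theorem Fin.filter_val_lt_succ {n : ℕ} (hn : n < T) :
    univ.filter (fun t : Fin T => t.1 < n + 1) = insert ⟨n, hn⟩ (univ.filter (·.1 < n)) := by
  ext t
  simp only [mem_filter, mem_univ, true_and, mem_insert, Fin.ext_iff]
  omega

omit [Fintype A] in
theorem transcriptPrefix_congr {a b : Fin T → A} {t : Fin T}
    (h : ∀ s : Fin T, s.1 < t.1 → a s = b s) : transcriptPrefix a t = transcriptPrefix b t :=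
  funext fun s => h _ s.2

omit [Fintype A] in
theorem transcriptPrefix_update_self (a : Fin T → A) (t : Fin T) (x : A) :
    transcriptPrefix (Function.update a t x) t = transcriptPrefix a t :=
  transcriptPrefix_congr fun _ hs => Function.update_of_ne (Fin.ne_of_lt hs) _ _

variable (p : ∀ t : Fin T, (Fin t.1 → A) → A → ℝ)

def pathProb (n : ℕ) (a : Fin T → A) : ℝ :=
  ∏ t with t.1 < n, p t (transcriptPrefix a t) (a t)

omit [Fintype A] in
theorem pathProb_zero (a : Fin T → A) : pathProb p 0 a = 1 := by
  simp [pathProb]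

omit [Fintype A] in
theorem pathProb_eq_prod (a : Fin T → A) :
    pathProb p T a = ∏ t, p t (transcriptPrefix a t) (a t) := by
  rw [pathProb, filter_true_of_mem fun t _ => t.2]

omit [Fintype A] in
theorem pathProb_succ {n : ℕ} (hn : n < T) (a : Fin T → A) :
    pathProb p (n + 1) a
      = p ⟨n, hn⟩ (transcriptPrefix a ⟨n, hn⟩) (a ⟨n, hn⟩) * pathProb p n a := by
  rw [pathProb, Fin.filter_val_lt_succ hn, prod_insert (by simp), pathProb]

omit [Fintype A] in
theorem pathProb_congr {n : ℕ} {a b : Fin T → A} (h : ∀ s : Fin T, s.1 < n → a s = b s) :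
    pathProb p n a = pathProb p n b := by
  refine prod_congr rfl fun t ht => ?_
  have htn : t.1 < n := (mem_filter.mp ht).2
  rw [transcriptPrefix_congr fun s hs => h s (hs.trans htn), h t htn]

omit [Fintype A] in
theorem pathProb_nonneg (hp : ∀ t h b, 0 ≤ p t h b) (n : ℕ) (a : Fin T → A) :
    0 ≤ pathProb p n a :=
  prod_nonneg fun _ _ => hp _ _ _

/-- The factor `card A` accounts for the coordinate `a n`, which `pathProb p n` leaves free. -/
theorem card_mul_sum_pathProb_succ_mul {n : ℕ} (hn : n < T) (f : (Fin T → A) → ℝ) :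
    Fintype.card A * ∑ a, pathProb p (n + 1) a * f a
      = ∑ a, pathProb p n a * ∑ b, p ⟨n, hn⟩ (transcriptPrefix a ⟨n, hn⟩) b
          * f (Function.update a ⟨n, hn⟩ b) := by
  have hbelow : ∀ (a : Fin T → A) b (s : Fin T), s.1 < n → Function.update a ⟨n, hn⟩ b s = a s :=
    fun a b s hs => Function.update_of_ne (Fin.ne_of_lt hs) _ _
  rw [← nsmul_eq_mul, ← Fintype.sum_sum_update_eq_card_mul ⟨n, hn⟩]
  refine sum_congr rfl fun a _ => ?_
  rw [mul_sum]
  refine sum_congr rfl fun b _ => ?_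
  rw [pathProb_succ p hn, pathProb_congr p (hbelow a b), transcriptPrefix_update_self,
    Function.update_self]
  ring

theorem card_pow_mul_sum_pathProb_mul_le (hp : ∀ t h b, 0 ≤ p t h b) {c : ℝ} (hc : 0 ≤ c)
    (F : ℕ → (Fin T → A) → ℝ)
    (hF : ∀ n (hn : n < T) a, ∑ b, p ⟨n, hn⟩ (transcriptPrefix a ⟨n, hn⟩) b
      * F (n + 1) (Function.update a ⟨n, hn⟩ b) ≤ c * F n a) :
    ∀ n ≤ T, (Fintype.card A : ℝ) ^ n * ∑ a, pathProb p n a * F n a ≤ c ^ n * ∑ a, F 0 a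
  | 0, _ => by simp [pathProb_zero]
  | n + 1, hn => by
    have ih := card_pow_mul_sum_pathProb_mul_le hp hc F hF n (by omega)
    calc (Fintype.card A : ℝ) ^ (n + 1) * ∑ a, pathProb p (n + 1) a * F (n + 1) a
        = (Fintype.card A : ℝ) ^ n * ∑ a, pathProb p n a * ∑ b, p ⟨n, hn⟩
            (transcriptPrefix a ⟨n, hn⟩) b * F (n + 1) (Function.update a ⟨n, hn⟩ b) := by
          rw [pow_succ, mul_assoc, card_mul_sum_pathProb_succ_mul p hn]
      _ ≤ (Fintype.card A : ℝ) ^ n * ∑ a, pathProb p n a * (c * F n a) := by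
          gcongr with a
          · exact pathProb_nonneg p hp n a
          · exact hF n hn a
      _ = c * ((Fintype.card A : ℝ) ^ n * ∑ a, pathProb p n a * F n a) := by
          rw [mul_sum, mul_sum, mul_sum]
          exact sum_congr rfl fun a _ => by ring
      _ ≤ c ^ (n + 1) * ∑ a, F 0 a := by
          rw [pow_succ', mul_assoc]
          exact mul_le_mul_of_nonneg_left ih hc

theorem sum_pathProb_eq_one [Nonempty A] (hp : ∀ t h b, 0 ≤ p t h b)
    (hp1 : ∀ t h, ∑ b, p t h b = 1) : ∑ a, pathProb p T a = 1 := by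
  have hmass : ∀ x : ℝ, (∑ a, pathProb p T a) * x ≤ x := fun x => by
    have h := card_pow_mul_sum_pathProb_mul_le p hp zero_le_one (fun _ _ => x)
      (fun n hn a => by rw [← sum_mul, hp1]) T le_rfl
    rw [← sum_mul, one_pow, one_mul, sum_const, card_univ, Fintype.card_fun, Fintype.card_fin,
      nsmul_eq_mul, Nat.cast_pow] at h
    exact le_of_mul_le_mul_left h (by positivity)
  linarith [hmass 1, hmass (-1)]

end AdaptiveSampling

theorem sum_mul_iSup_le_log_div {Ω ι : Type*} [Fintype Ω] [Fintype ι] [Nonempty ι]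
    {P : Ω → ℝ} (hP0 : ∀ ω, 0 ≤ P ω) (hP1 : ∑ ω, P ω = 1) (X : Ω → ι → ℝ) {η c : ℝ}
    (hη : 0 < η) (hc : 0 < c) (hW : ∑ ω, P ω * ∑ j, exp (η * X ω j) ≤ c) :
    ∑ ω, P ω * ⨆ j, X ω j ≤ log c / η := by
  set W : Ω → ℝ := fun ω => ∑ j, exp (η * X ω j)
  have hWpos : ∀ ω, 0 < W ω := fun ω => sum_pos (fun j _ => exp_pos _) univ_nonempty
  -- the tangent line of `log` at `c`
  have hmax : ∀ ω, η * ⨆ j, X ω j ≤ W ω / c - 1 + log c := by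
    intro ω
    obtain ⟨j, hj⟩ := exists_eq_ciSup_of_finite (f := X ω)
    have hlog := log_le_sub_one_of_pos (div_pos (hWpos ω) hc)
    rw [log_div (hWpos ω).ne' hc.ne'] at hlog
    calc η * ⨆ j, X ω j = η * X ω j := by rw [hj]
      _ ≤ log (W ω) := (le_log_iff_exp_le (hWpos ω)).mpr <|
          single_le_sum (f := fun j => exp (η * X ω j)) (fun j _ => (exp_pos _).le) (mem_univ j)
      _ ≤ W ω / c - 1 + log c := by linarith
  rw [le_div_iff₀ hη, sum_mul]
  calc ∑ ω, P ω * (⨆ j, X ω j) * η = ∑ ω, P ω * (η * ⨆ j, X ω j) :=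
        sum_congr rfl fun ω _ => by ring
    _ ≤ ∑ ω, P ω * (W ω / c - 1 + log c) := by
        gcongr with ω
        · exact hP0 ω
        · exact hmax ω
    _ = (∑ ω, P ω * W ω) / c - 1 + log c := by
        simp only [mul_add, mul_sub, mul_div_assoc', sum_add_distrib, sum_sub_distrib, ← sum_div,
          ← sum_mul, hP1, mul_one, one_mul]
    _ ≤ log c := by
        have : (∑ ω, P ω * W ω) / c ≤ 1 := (div_le_one hc).mpr hW
        linarith

section SleepingHedge

variable {A : Type} [Fintype A] [DecidableEq A] {T : ℕ}

def historyRegret {m : ℕ} (h : Fin m → A) (past : Fin m → A → ℝ) (pastAv : Fin m → Finset A)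
    (j : A) : ℝ :=
  ∑ s, awakeRegret (pastAv s) (past s) (h s) j

def sleepingHedge (η : ℝ) : SleepingStrategy A T :=
  fun _ h past pastAv C => awakeNormalize C fun j => exp (η * historyRegret h past pastAv j)

theorem sleepingHedge_isDistribution (η : ℝ) (t : Fin T) (h : Fin t.1 → A)
    (past : Fin t.1 → A → ℝ) (pastAv : Fin t.1 → Finset A) {C : Finset A} (hC : C.Nonempty) :
    (∀ j, 0 ≤ sleepingHedge η t h past pastAv C j) ∧
      (∀ j ∉ C, sleepingHedge η t h past pastAv C j = 0) ∧
      ∑ j, sleepingHedge η t h past pastAv C j = 1 :=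
  ⟨awakeNormalize_nonneg fun _ _ => (exp_pos _).le, fun _ hj => awakeNormalize_of_notMem hj,
    sum_awakeNormalize hC fun _ _ => exp_pos _⟩

variable (Av : ∀ t : Fin T, (Fin t.1 → A) → Finset A) (r : ∀ t : Fin T, (Fin t.1 → A) → A → ℝ)

def cumRegret (n : ℕ) (a : Fin T → A) (j : A) : ℝ :=
  ∑ t with t.1 < n, awakeRegret (Av t (transcriptPrefix a t)) (r t (transcriptPrefix a t)) (a t) j

def expPotential (η : ℝ) (n : ℕ) (a : Fin T → A) : ℝ :=
  ∑ j, exp (η * cumRegret Av r n a j)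

omit [Fintype A] in
theorem cumRegret_eq_sum (a : Fin T → A) (j : A) :
    cumRegret Av r T a j = ∑ t, if j ∈ Av t (transcriptPrefix a t) then
      r t (transcriptPrefix a t) (a t) - r t (transcriptPrefix a t) j else 0 := by
  rw [cumRegret, filter_true_of_mem fun t _ => t.2]
  rfl

omit [Fintype A] in
theorem cumRegret_of_subsingleton [Subsingleton A] (n : ℕ) (a : Fin T → A) (j : A) :
    cumRegret Av r n a j = 0 :=
  sum_eq_zero fun t _ => by simp [awakeRegret, Subsingleton.elim (a t) j]

omit [Fintype A] in
theorem cumRegret_congr {n : ℕ} {a b : Fin T → A} (h : ∀ s : Fin T, s.1 < n → a s = b s)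
    (j : A) : cumRegret Av r n a j = cumRegret Av r n b j := by
  refine sum_congr rfl fun t ht => ?_
  have htn : t.1 < n := (mem_filter.mp ht).2
  rw [transcriptPrefix_congr fun s hs => h s (hs.trans htn), h t htn]

omit [Fintype A] in
theorem cumRegret_succ {n : ℕ} (hn : n < T) (a : Fin T → A) (j : A) :
    cumRegret Av r (n + 1) a j = cumRegret Av r n a j
      + awakeRegret (Av ⟨n, hn⟩ (transcriptPrefix a ⟨n, hn⟩))
          (r ⟨n, hn⟩ (transcriptPrefix a ⟨n, hn⟩)) (a ⟨n, hn⟩) j := by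
  rw [cumRegret, Fin.filter_val_lt_succ hn, sum_insert (by simp), add_comm, cumRegret]

theorem expPotential_zero (η : ℝ) (a : Fin T → A) :
    expPotential Av r η 0 a = Fintype.card A := by
  simp [expPotential, cumRegret]

omit [Fintype A] in
theorem historyRegret_transcriptPrefix (t : Fin T) (a : Fin T → A) (j : A) :
    historyRegret (transcriptPrefix a t)
        (fun s => r ⟨s.1, s.2.trans t.2⟩ (historyPrefix (transcriptPrefix a t) s))
        (fun s => Av ⟨s.1, s.2.trans t.2⟩ (historyPrefix (transcriptPrefix a t) s)) j
      = cumRegret Av r t a j := by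
  rw [cumRegret, sum_subtype (p := fun s : Fin T => s.1 < t.1) _ fun s => by simp]
  exact Equiv.sum_comp (Fin.castLEquiv t.2.le) fun s => awakeRegret
    (Av s (transcriptPrefix a s)) (r s (transcriptPrefix a s)) (a s) j

omit [Fintype A] in
theorem sleepingPlay_sleepingHedge (η : ℝ) (t : Fin T) (a : Fin T → A) :
    sleepingPlay (sleepingHedge η) Av r t (transcriptPrefix a t)
      = awakeNormalize (Av t (transcriptPrefix a t)) fun j => exp (η * cumRegret Av r t a j) := by
  simp only [sleepingPlay, sleepingHedge, historyRegret_transcriptPrefix]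

theorem sum_sleepingHedge_mul_expPotential_succ_le {η : ℝ} (hη0 : 0 ≤ η) (hη1 : η ≤ 1)
    (hAv : ∀ t h, (Av t h).Nonempty) (hr : ∀ t h j, r t h j ∈ Set.Icc (0 : ℝ) 1) {n : ℕ}
    (hn : n < T) (a : Fin T → A) :
    ∑ b, sleepingPlay (sleepingHedge η) Av r ⟨n, hn⟩ (transcriptPrefix a ⟨n, hn⟩) b
        * expPotential Av r η (n + 1) (Function.update a ⟨n, hn⟩ b)
      ≤ (1 + η ^ 2) * expPotential Av r η n a := by
  set i : Fin T := ⟨n, hn⟩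
  set C := Av i (transcriptPrefix a i)
  set ρ := r i (transcriptPrefix a i)
  have hupdate : ∀ b, expPotential Av r η (n + 1) (Function.update a i b)
      = ∑ j, exp (η * cumRegret Av r n a j) * exp (η * awakeRegret C ρ b j) := by
    intro b
    refine sum_congr rfl fun j _ => ?_
    rw [cumRegret_succ Av r hn, cumRegret_congr Av r (b := a)
      (fun s hs => Function.update_of_ne (Fin.ne_of_lt (show s < i from hs)) _ _),
      transcriptPrefix_update_self, Function.update_self, mul_add, exp_add]
  simp only [hupdate, sleepingPlay_sleepingHedge]
  exact sum_awakeNormalize_mul_sum_exp_le (hAv _ _) (fun _ => exp_pos _) (hr _ _) hη0 hη1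

theorem sleepingHedge_expected_regret_le [Nonempty A] {η : ℝ} (hη0 : 0 < η) (hη1 : η ≤ 1)
    (hAv : ∀ t h, (Av t h).Nonempty) (hr : ∀ t h j, r t h j ∈ Set.Icc (0 : ℝ) 1) :
    ∑ a, pathProb (sleepingPlay (sleepingHedge η) Av r) T a * ⨆ j, cumRegret Av r T a j
      ≤ (log (Fintype.card A) + T * η ^ 2) / η := by
  set p := sleepingPlay (sleepingHedge η) Av r
  have hp0 : ∀ t h b, 0 ≤ p t h b :=
    fun t h => (sleepingHedge_isDistribution η t h _ _ (hAv t h)).1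
  have hp1 : ∀ t h, ∑ b, p t h b = 1 :=
    fun t h => (sleepingHedge_isDistribution η t h _ _ (hAv t h)).2.2
  have hcard : (0 : ℝ) < Fintype.card A := Nat.cast_pos.mpr Fintype.card_pos
  have hW : ∑ a, pathProb p T a * expPotential Av r η T a
      ≤ Fintype.card A * (1 + η ^ 2) ^ T := by
    have h := card_pow_mul_sum_pathProb_mul_le p hp0 (by positivity)
      (expPotential Av r η)
      (fun n hn a => sum_sleepingHedge_mul_expPotential_succ_le Av r hη0.le hη1 hAv hr hn a)
      T le_rfl
    simp only [expPotential_zero, sum_const, card_univ, Fintype.card_fun, Fintype.card_fin,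
      nsmul_eq_mul, Nat.cast_pow] at h
    refine le_of_mul_le_mul_left ?_ (pow_pos hcard T)
    linarith
  have hlog : log (1 + η ^ 2) ≤ η ^ 2 := by
    linarith [log_le_sub_one_of_pos (by positivity : (0 : ℝ) < 1 + η ^ 2)]
  calc ∑ a, pathProb p T a * ⨆ j, cumRegret Av r T a j
      ≤ log (Fintype.card A * (1 + η ^ 2) ^ T) / η :=
        sum_mul_iSup_le_log_div (pathProb_nonneg p hp0 T) (sum_pathProb_eq_one p hp0 hp1) _ hη0
          (by positivity) hW
    _ ≤ (log (Fintype.card A) + T * η ^ 2) / η := by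
        rw [log_mul hcard.ne' (by positivity), log_pow]
        gcongr

end SleepingHedge

/-- In the sleeping experts setting with `T ≥ ln|A|`, there exists an
algorithm for the Learner, playing at each round a distribution over the currently awake
actions, guaranteeing against any adaptive Adversary
`E[R^T_sleeping] ≤ 4√(T ln|A|)`, where
`R^T_sleeping = max_{j∈A} Σ_{t : j ∈ A^t} (r^t_{a^t} − r^t_j)`. -/
theorem sleeping_experts_regret_bound
    (A : Type) [Fintype A] [Nonempty A] [DecidableEq A] (T : ℕ)
    (hT : Real.log (Fintype.card A) ≤ T) :
    ∃ σ : SleepingStrategy A T,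
      -- σ always outputs a distribution supported on the awake experts
      (∀ t h past pastAv curAv, (curAv : Finset A).Nonempty →
        (∀ j, 0 ≤ σ t h past pastAv curAv j) ∧
        (∀ j ∉ curAv, σ t h past pastAv curAv j = 0) ∧
        ∑ j, σ t h past pastAv curAv j = 1) ∧
      ∀ (Av : ∀ t : Fin T, (Fin t.1 → A) → Finset A)
        (r : ∀ t : Fin T, (Fin t.1 → A) → A → ℝ),
        (∀ t h, (Av t h).Nonempty) →
        (∀ t h j, r t h j ∈ Set.Icc (0 : ℝ) 1) →
        ∑ a : Fin T → A, (∏ t, sleepingPlay σ Av r t (transcriptPrefix a t) (a t)) *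
            (⨆ j : A, ∑ t, if j ∈ Av t (transcriptPrefix a t) then
              r t (transcriptPrefix a t) (a t) - r t (transcriptPrefix a t) j else 0) ≤
          4 * Real.sqrt (T * Real.log (Fintype.card A)) := by
  set L := log (Fintype.card A)
  refine ⟨sleepingHedge (√(L / T)), fun t h past pastAv curAv hC =>
    sleepingHedge_isDistribution _ t h past pastAv hC, fun Av r hAv hr => ?_⟩
  simp only [← pathProb_eq_prod, ← cumRegret_eq_sum]
  rcases subsingleton_or_nontrivial A with hA | hA
  · simp only [cumRegret_of_subsingleton, ciSup_const, mul_zero, sum_const_zero]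
    positivity
  have hL : 0 < L := log_pos (by exact_mod_cast Fintype.one_lt_card)
  have hT0 : (0 : ℝ) < T := hL.trans_le hT
  have hη : 0 < √(L / T) := sqrt_pos.mpr (div_pos hL hT0)
  have hη1 : √(L / T) ≤ 1 := sqrt_le_one.mpr ((div_le_one hT0).mpr hT)
  calc _ ≤ (L + T * √(L / T) ^ 2) / √(L / T) :=
        sleepingHedge_expected_regret_le Av r hη hη1 hAv hr
    _ = 2 * √(T * L) := by
        rw [sq_sqrt (div_nonneg hL.le hT0.le), mul_div_cancel₀ _ hT0.ne', div_eq_iff hη.ne',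
          mul_assoc, ← sqrt_mul (by positivity), mul_div_assoc', mul_assoc,
          mul_div_cancel_left₀ _ hT0.ne', sqrt_mul_self hL.le]
        ring
    _ ≤ 4 * √(T * L) := by linarith [sqrt_nonneg (T * L)]

end
end

section
/- In the multi-group experts setting with finite action set A, group collection G, and T ≥ ln(|A|·|G|), there exists an algorithm for the Learner guaranteeing, against any adaptive Adversary, expected multi-group regret E[R^T_multi] ≤ 4·√(T·ln(|A|·|G|)). -/
open scoped BigOperators Classical

noncomputable section

/-- A learner's algorithm in the multi-group (contextual) experts setting: at round `t`
it maps the realized history, the past contexts, the current context and the past loss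
vectors to a distribution over actions. -/
def ContextualStrategy (A Θ : Type) (T : ℕ) : Type :=
  ∀ t : Fin T, (Fin t.1 → A) →            -- realized history
    (Fin t.1 → Θ) →                       -- past contexts
    Θ →                                   -- current context θ^t
    (Fin t.1 → A → ℝ) →                   -- past loss vectors
    A → ℝ

/-- The per-round play induced by a strategy `σ` against the adaptive Adversary
`(θc, r)`. -/
noncomputable def contextualPlay {A Θ : Type} {T : ℕ} (σ : ContextualStrategy A Θ T)
    (θc : ∀ t : Fin T, (Fin t.1 → A) → Θ)
    (r : ∀ t : Fin T, (Fin t.1 → A) → A → ℝ)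
    (t : Fin T) (h : Fin t.1 → A) : A → ℝ :=
  σ t h (fun s => θc ⟨s.1, s.2.trans t.2⟩ (historyPrefix h s)) (θc t h)
    (fun s => r ⟨s.1, s.2.trans t.2⟩ (historyPrefix h s))

set_option linter.unusedSectionVars false

-- auxiliary lemmas

lemma exp_quad {x : ℝ} (hx : |x| ≤ 1) : Real.exp x ≤ 1 + x + x ^ 2 := by
  have h := Real.exp_bound hx (n := 2) (by norm_num)
  have hs : ∑ i ∈ Finset.range 2, x ^ i / (Nat.factorial i) = 1 + x := by
    simp [Finset.sum_range_succ]
  rw [hs] at h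
  have h2 := (abs_le.1 h).2
  rw [sq_abs] at h2
  norm_num [Nat.factorial] at h2
  nlinarith [sq_nonneg x]

section MG
variable {A Θ ι : Type} [Fintype A] [Nonempty A] [Fintype ι] [Nonempty ι]

lemma sum_pi_snoc {β : Type*} [AddCommMonoid β] {t : ℕ} (F : (Fin (t + 1) → A) → β) :
    ∑ h : Fin (t + 1) → A, F h = ∑ h : Fin t → A, ∑ a : A, F (Fin.snoc h a) := by
  rw [← (Fin.snocEquiv (fun _ => A)).sum_comp F, Fintype.sum_prod_type, Finset.sum_comm]
  rfl

lemma historyPrefix_snoc_castSucc {t : ℕ} (h : Fin t → A) (a : A) (s : Fin t) :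
    historyPrefix (Fin.snoc h a : Fin (t + 1) → A) (Fin.castSucc s) = historyPrefix h s := by
  funext u
  show (Fin.snoc h a : Fin (t + 1) → A) ⟨u.1, _⟩ = h ⟨u.1, _⟩
  have he : (⟨u.1, Nat.lt_succ_of_lt (u.2.trans s.2)⟩ : Fin (t + 1)) =
      Fin.castSucc ⟨u.1, u.2.trans s.2⟩ := rfl
  rw [he, Fin.snoc_castSucc]

lemma historyPrefix_snoc_last {t : ℕ} (h : Fin t → A) (a : A) :
    historyPrefix (Fin.snoc h a : Fin (t + 1) → A) (Fin.last t) = h := by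
  funext u
  show (Fin.snoc h a : Fin (t + 1) → A) ⟨u.1, _⟩ = h u
  have he : (⟨u.1, Nat.lt_succ_of_lt u.2⟩ : Fin (t + 1)) = Fin.castSucc u := rfl
  rw [he, Fin.snoc_castSucc]

/-- Cumulative regret of expert `p = (group, action)` over the past. -/
def mgCum (g : ι → Set Θ) {t : ℕ} (h : Fin t → A) (pastθ : Fin t → Θ)
    (past : Fin t → A → ℝ) (p : ι × A) : ℝ :=
  ∑ s, if pastθ s ∈ g p.1 then past s (h s) - past s p.2 else 0

/-- Exponential weight of expert `p`. -/
noncomputable def mgW (g : ι → Set Θ) (η : ℝ) {t : ℕ} (h : Fin t → A) (pastθ : Fin t → Θ)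
    (past : Fin t → A → ℝ) (p : ι × A) : ℝ :=
  Real.exp (η * mgCum g h pastθ past p)

/-- The sleeping-experts exponential weights strategy. -/
noncomputable def mgσ (g : ι → Set Θ) (η : ℝ) (T : ℕ) : ContextualStrategy A Θ T :=
  fun _t h pastθ θ past j =>
    if ∃ i, θ ∈ g i then
      (∑ i, if θ ∈ g i then mgW g η h pastθ past (i, j) else 0) /
        (∑ p : ι × A, if θ ∈ g p.1 then mgW g η h pastθ past p else 0)
    else (Fintype.card A : ℝ)⁻¹

lemma mgW_pos (g : ι → Set Θ) (η : ℝ) {t : ℕ} (h : Fin t → A) (pastθ : Fin t → Θ)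
    (past : Fin t → A → ℝ) (p : ι × A) : 0 < mgW g η h pastθ past p := Real.exp_pos _

lemma mgDen_pos (g : ι → Set Θ) (η : ℝ) {t : ℕ} (h : Fin t → A) (pastθ : Fin t → Θ)
    (past : Fin t → A → ℝ) {θ : Θ} (hθ : ∃ i, θ ∈ g i) :
    0 < ∑ p : ι × A, if θ ∈ g p.1 then mgW g η h pastθ past p else 0 := by
  obtain ⟨i0, hi0⟩ := hθ
  obtain ⟨a0⟩ := (inferInstance : Nonempty A)
  refine Finset.sum_pos' (fun p _ => ?_) ⟨(i0, a0), Finset.mem_univ _, ?_⟩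
  · split_ifs
    · exact (mgW_pos g η h pastθ past p).le
    · exact le_refl 0
  · simpa [hi0] using mgW_pos g η h pastθ past (i0, a0)

lemma mgσ_nonneg (g : ι → Set Θ) (η : ℝ) (T : ℕ) (t : Fin T) (h : Fin t.1 → A)
    (pastθ : Fin t.1 → Θ) (θ : Θ) (past : Fin t.1 → A → ℝ) (j : A) :
    0 ≤ mgσ g η T t h pastθ θ past j := by
  unfold mgσ
  split_ifs with hθ
  · refine div_nonneg (Finset.sum_nonneg fun i _ => ?_) (mgDen_pos g η h pastθ past hθ).le
    split_ifs
    · exact (mgW_pos g η h pastθ past (i, j)).le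
    · exact le_refl 0
  · positivity

lemma mgσ_sum_one (g : ι → Set Θ) (η : ℝ) (T : ℕ) (t : Fin T) (h : Fin t.1 → A)
    (pastθ : Fin t.1 → Θ) (θ : Θ) (past : Fin t.1 → A → ℝ) :
    ∑ j, mgσ g η T t h pastθ θ past j = 1 := by
  unfold mgσ
  by_cases hθ : ∃ i, θ ∈ g i
  · simp only [if_pos hθ]
    rw [← Finset.sum_div]
    rw [div_eq_one_iff_eq (mgDen_pos g η h pastθ past hθ).ne']
    rw [Fintype.sum_prod_type, Finset.sum_comm]
  · simp only [if_neg hθ]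
    rw [Finset.sum_const, Finset.card_univ, nsmul_eq_mul]
    rw [mul_inv_cancel₀]
    exact_mod_cast Fintype.card_ne_zero

lemma mg_key (g : ι → Set Θ) (η : ℝ) (T : ℕ) (t : Fin T) (h : Fin t.1 → A)
    (pastθ : Fin t.1 → Θ) (θ : Θ) (past : Fin t.1 → A → ℝ) (ρ : A → ℝ) :
    ∑ p : ι × A, mgW g η h pastθ past p *
      (if θ ∈ g p.1 then (∑ a, mgσ g η T t h pastθ θ past a * ρ a) - ρ p.2 else 0) = 0 := by
  by_cases hθ : ∃ i, θ ∈ g i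
  · set W := ∑ p : ι × A, if θ ∈ g p.1 then mgW g η h pastθ past p else 0 with hWdef
    have hW : 0 < W := mgDen_pos g η h pastθ past hθ
    set X := ∑ a, mgσ g η T t h pastθ θ past a * ρ a with hXdef
    have hXW : X * W = ∑ p : ι × A, if θ ∈ g p.1 then mgW g η h pastθ past p * ρ p.2 else 0 := by
      have hx : ∀ a, mgσ g η T t h pastθ θ past a =
          (∑ i, if θ ∈ g i then mgW g η h pastθ past (i, a) else 0) / W := by
        intro a; simp only [mgσ, if_pos hθ, hWdef]
      calc X * W = ∑ a, (∑ i, if θ ∈ g i then mgW g η h pastθ past (i, a) else 0) * ρ a := by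
              rw [hXdef, Finset.sum_mul]
              refine Finset.sum_congr rfl fun a _ => ?_
              rw [hx a]
              field_simp
        _ = ∑ a, ∑ i, (if θ ∈ g i then mgW g η h pastθ past (i, a) * ρ a else 0) := by
              refine Finset.sum_congr rfl fun a _ => ?_
              rw [Finset.sum_mul]
              exact Finset.sum_congr rfl fun i _ => by split_ifs <;> simp
        _ = ∑ p : ι × A, if θ ∈ g p.1 then mgW g η h pastθ past p * ρ p.2 else 0 := by
              rw [Fintype.sum_prod_type, Finset.sum_comm]
    have expand : ∀ p : ι × A, mgW g η h pastθ past p *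
        (if θ ∈ g p.1 then X - ρ p.2 else 0) =
        (if θ ∈ g p.1 then mgW g η h pastθ past p else 0) * X -
          (if θ ∈ g p.1 then mgW g η h pastθ past p * ρ p.2 else 0) := by
      intro p; split_ifs <;> ring
    rw [Finset.sum_congr rfl fun p _ => expand p, Finset.sum_sub_distrib, ← Finset.sum_mul]
    rw [← hWdef, ← hXW]
    ring
  · have hz : ∀ p : ι × A, (if θ ∈ g p.1 then
        (∑ a, mgσ g η T t h pastθ θ past a * ρ a) - ρ p.2 else 0) = 0 := by
      intro p
      exact if_neg (fun hp => hθ ⟨p.1, hp⟩)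
    simp only [hz, mul_zero, Finset.sum_const_zero]

lemma mg_round (g : ι → Set Θ) {η : ℝ} (hη0 : 0 ≤ η) (hη1 : η ≤ 1) (T : ℕ) (t : Fin T)
    (h : Fin t.1 → A) (pastθ : Fin t.1 → Θ) (θ : Θ) (past : Fin t.1 → A → ℝ)
    (ρ : A → ℝ) (hρ : ∀ a, ρ a ∈ Set.Icc (0 : ℝ) 1) :
    ∑ a, mgσ g η T t h pastθ θ past a *
        ∑ p : ι × A, Real.exp (η * (mgCum g h pastθ past p +
          if θ ∈ g p.1 then ρ a - ρ p.2 else 0)) ≤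
      (1 + η ^ 2) * ∑ p : ι × A, Real.exp (η * mgCum g h pastθ past p) := by
  set x := mgσ g η T t h pastθ θ past with hxdef
  have hx0 : ∀ a, 0 ≤ x a := fun a => mgσ_nonneg g η T t h pastθ θ past a
  have hx1 : ∑ a, x a = 1 := mgσ_sum_one g η T t h pastθ θ past
  set s : ι × A → A → ℝ := fun p a => if θ ∈ g p.1 then ρ a - ρ p.2 else 0 with hsdef
  have hs1 : ∀ p a, |s p a| ≤ 1 := by
    intro p a
    rw [hsdef]
    dsimp only
    split_ifs
    · rw [abs_le]
      constructor <;> [linarith [(hρ a).1, (hρ p.2).2]; linarith [(hρ a).2, (hρ p.2).1]]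
    · simp
  have key : ∑ p : ι × A, mgW g η h pastθ past p * (∑ a, x a * s p a) = 0 := by
    have : ∀ p : ι × A, (∑ a, x a * s p a) =
        (if θ ∈ g p.1 then (∑ a, x a * ρ a) - ρ p.2 else 0) := by
      intro p
      rw [hsdef]
      dsimp only
      split_ifs
      · rw [Finset.sum_congr rfl fun a _ => mul_sub (x a) (ρ a) (ρ p.2),
          Finset.sum_sub_distrib, ← Finset.sum_mul, hx1, one_mul]
      · simp
    rw [Finset.sum_congr rfl fun p _ => by rw [this p]]
    exact mg_key g η T t h pastθ θ past ρ
  have swap : ∑ a, x a * ∑ p : ι × A, Real.exp (η * (mgCum g h pastθ past p + s p a)) =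
      ∑ p : ι × A, mgW g η h pastθ past p * ∑ a, x a * Real.exp (η * s p a) := by
    have e1 : ∀ a, x a * ∑ p : ι × A, Real.exp (η * (mgCum g h pastθ past p + s p a)) =
        ∑ p : ι × A, x a * (mgW g η h pastθ past p * Real.exp (η * s p a)) := by
      intro a
      rw [Finset.mul_sum]
      refine Finset.sum_congr rfl fun p _ => ?_
      rw [mul_add, Real.exp_add]
      rfl
    rw [Finset.sum_congr rfl fun a _ => e1 a, Finset.sum_comm]
    refine Finset.sum_congr rfl fun p _ => ?_
    rw [Finset.mul_sum]
    exact Finset.sum_congr rfl fun a _ => by ring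
  rw [swap]
  have bnd : ∀ p : ι × A, mgW g η h pastθ past p * ∑ a, x a * Real.exp (η * s p a) ≤
      mgW g η h pastθ past p * ((1 + η ^ 2) + η * ∑ a, x a * s p a) := by
    intro p
    refine mul_le_mul_of_nonneg_left ?_ (mgW_pos g η h pastθ past p).le
    have hterm : ∀ a, x a * Real.exp (η * s p a) ≤ x a * (1 + η * s p a + η ^ 2) := by
      intro a
      refine mul_le_mul_of_nonneg_left ?_ (hx0 a)
      have habs : |η * s p a| ≤ 1 := by
        rw [abs_mul]
        calc |η| * |s p a| ≤ 1 * 1 :=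
              mul_le_mul (by rwa [abs_of_nonneg hη0]) (hs1 p a) (abs_nonneg _) zero_le_one
          _ = 1 := one_mul 1
      have hsq : s p a ^ 2 ≤ 1 := by
        have h1 := hs1 p a
        nlinarith [sq_abs (s p a), abs_nonneg (s p a)]
      have h2 : (η * s p a) ^ 2 ≤ η ^ 2 := by nlinarith [sq_nonneg η]
      have h3 := exp_quad habs
      linarith
    calc ∑ a, x a * Real.exp (η * s p a) ≤ ∑ a, x a * (1 + η * s p a + η ^ 2) :=
          Finset.sum_le_sum fun a _ => hterm a
      _ = (1 + η ^ 2) + η * ∑ a, x a * s p a := by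
          have e2 : (∑ a, x a * (1 + η * s p a + η ^ 2)) =
              ∑ a, (x a * (1 + η ^ 2) + η * (x a * s p a)) :=
            Finset.sum_congr rfl fun a _ => by ring
          rw [e2, Finset.sum_add_distrib, ← Finset.sum_mul, hx1, ← Finset.mul_sum, one_mul]
  calc ∑ p : ι × A, mgW g η h pastθ past p * ∑ a, x a * Real.exp (η * s p a)
      ≤ ∑ p : ι × A, mgW g η h pastθ past p * ((1 + η ^ 2) + η * ∑ a, x a * s p a) :=
        Finset.sum_le_sum fun p _ => bnd p
    _ = (1 + η ^ 2) * ∑ p : ι × A, mgW g η h pastθ past p +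
        η * ∑ p : ι × A, mgW g η h pastθ past p * (∑ a, x a * s p a) := by
        have e3 : (∑ p : ι × A, mgW g η h pastθ past p * ((1 + η ^ 2) + η * ∑ a, x a * s p a)) =
            ∑ p : ι × A, ((1 + η ^ 2) * mgW g η h pastθ past p +
              η * (mgW g η h pastθ past p * (∑ a, x a * s p a))) :=
          Finset.sum_congr rfl fun p _ => by ring
        rw [e3, Finset.sum_add_distrib, ← Finset.mul_sum, ← Finset.mul_sum]
    _ = (1 + η ^ 2) * ∑ p : ι × A, Real.exp (η * mgCum g h pastθ past p) := by
        rw [key, mul_zero, add_zero]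
        rfl

/-- Cumulative regret of expert `p` over a full prefix of play. -/
def mgS (g : ι → Set Θ) {T : ℕ} (θc : ∀ t : Fin T, (Fin t.1 → A) → Θ)
    (r : ∀ t : Fin T, (Fin t.1 → A) → A → ℝ) (t : ℕ) (ht : t ≤ T) (h : Fin t → A)
    (p : ι × A) : ℝ :=
  ∑ s : Fin t, if θc ⟨s.1, s.2.trans_le ht⟩ (historyPrefix h s) ∈ g p.1 then
    r ⟨s.1, s.2.trans_le ht⟩ (historyPrefix h s) (h s) -
      r ⟨s.1, s.2.trans_le ht⟩ (historyPrefix h s) p.2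
  else 0

/-- Probability of a transcript prefix. -/
noncomputable def mgπ {T : ℕ} (σ : ContextualStrategy A Θ T)
    (θc : ∀ t : Fin T, (Fin t.1 → A) → Θ)
    (r : ∀ t : Fin T, (Fin t.1 → A) → A → ℝ) (t : ℕ) (ht : t ≤ T) (h : Fin t → A) : ℝ :=
  ∏ s : Fin t, contextualPlay σ θc r ⟨s.1, s.2.trans_le ht⟩ (historyPrefix h s) (h s)

lemma mgπ_snoc {T : ℕ} (σ : ContextualStrategy A Θ T)
    (θc : ∀ t : Fin T, (Fin t.1 → A) → Θ)
    (r : ∀ t : Fin T, (Fin t.1 → A) → A → ℝ) (t : ℕ) (ht : t + 1 ≤ T) (h : Fin t → A) (a : A) :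
    mgπ σ θc r (t + 1) ht (Fin.snoc h a) =
      mgπ σ θc r t (Nat.le_of_succ_le ht) h *
        contextualPlay σ θc r ⟨t, ht⟩ h a := by
  unfold mgπ
  rw [Fin.prod_univ_castSucc]
  congr 1
  · refine Finset.prod_congr rfl fun u _ => ?_
    have h1 : historyPrefix (Fin.snoc h a : Fin (t + 1) → A) (Fin.castSucc u) =
        historyPrefix h u := historyPrefix_snoc_castSucc h a u
    have h2 : (Fin.snoc h a : Fin (t + 1) → A) (Fin.castSucc u) = h u := by simp
    exact congrArg₂ (fun (z : Fin u.1 → A) (w : A) =>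
      contextualPlay σ θc r ⟨u.1, u.2.trans_le (Nat.le_of_succ_le ht)⟩ z w) h1 h2
  · have h1 : historyPrefix (Fin.snoc h a : Fin (t + 1) → A) (Fin.last t) = h :=
      historyPrefix_snoc_last h a
    have h2 : (Fin.snoc h a : Fin (t + 1) → A) (Fin.last t) = a := by simp
    exact congrArg₂ (fun (z : Fin t → A) (w : A) =>
      contextualPlay σ θc r ⟨t, ht⟩ z w) h1 h2

lemma mgS_snoc (g : ι → Set Θ) {T : ℕ} (θc : ∀ t : Fin T, (Fin t.1 → A) → Θ)
    (r : ∀ t : Fin T, (Fin t.1 → A) → A → ℝ) (t : ℕ) (ht : t + 1 ≤ T)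
    (h : Fin t → A) (a : A) (p : ι × A) :
    mgS g θc r (t + 1) ht (Fin.snoc h a) p =
      mgS g θc r t (Nat.le_of_succ_le ht) h p +
        (if θc ⟨t, ht⟩ h ∈ g p.1 then r ⟨t, ht⟩ h a - r ⟨t, ht⟩ h p.2 else 0) := by
  unfold mgS
  rw [Fin.sum_univ_castSucc]
  congr 1
  · refine Finset.sum_congr rfl fun u _ => ?_
    have h1 : historyPrefix (Fin.snoc h a : Fin (t + 1) → A) (Fin.castSucc u) =
        historyPrefix h u := historyPrefix_snoc_castSucc h a u
    have h2 : (Fin.snoc h a : Fin (t + 1) → A) (Fin.castSucc u) = h u := by simp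
    exact congrArg₂ (fun (z : Fin u.1 → A) (w : A) =>
      if θc ⟨u.1, u.2.trans_le (Nat.le_of_succ_le ht)⟩ z ∈ g p.1 then
        r ⟨u.1, u.2.trans_le (Nat.le_of_succ_le ht)⟩ z w -
          r ⟨u.1, u.2.trans_le (Nat.le_of_succ_le ht)⟩ z p.2
      else 0) h1 h2
  · have h1 : historyPrefix (Fin.snoc h a : Fin (t + 1) → A) (Fin.last t) = h :=
      historyPrefix_snoc_last h a
    have h2 : (Fin.snoc h a : Fin (t + 1) → A) (Fin.last t) = a := by simp
    exact congrArg₂ (fun (z : Fin t → A) (w : A) =>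
      if θc ⟨t, ht⟩ z ∈ g p.1 then r ⟨t, ht⟩ z w - r ⟨t, ht⟩ z p.2 else 0) h1 h2

lemma mgπ_nonneg (g : ι → Set Θ) (η : ℝ) {T : ℕ} (θc : ∀ t : Fin T, (Fin t.1 → A) → Θ)
    (r : ∀ t : Fin T, (Fin t.1 → A) → A → ℝ) (t : ℕ) (ht : t ≤ T) (h : Fin t → A) :
    0 ≤ mgπ (mgσ g η T) θc r t ht h :=
  Finset.prod_nonneg fun u _ => mgσ_nonneg g η T _ _ _ _ _ _

lemma mgπ_sum_one (g : ι → Set Θ) (η : ℝ) {T : ℕ} (θc : ∀ t : Fin T, (Fin t.1 → A) → Θ)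
    (r : ∀ t : Fin T, (Fin t.1 → A) → A → ℝ) :
    ∀ (t : ℕ) (ht : t ≤ T), ∑ h : Fin t → A, mgπ (mgσ g η T) θc r t ht h = 1 := by
  intro t
  induction t with
  | zero =>
    intro ht
    rw [Fintype.sum_unique]
    simp [mgπ]
  | succ t ih =>
    intro ht
    rw [sum_pi_snoc]
    have e1 : ∀ h : Fin t → A, ∑ a : A, mgπ (mgσ g η T) θc r (t + 1) ht (Fin.snoc h a) =
        mgπ (mgσ g η T) θc r t (Nat.le_of_succ_le ht) h := by
      intro h
      rw [Finset.sum_congr rfl fun a _ => mgπ_snoc (mgσ g η T) θc r t ht h a]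
      rw [← Finset.mul_sum]
      have : ∑ a : A, contextualPlay (mgσ g η T) θc r ⟨t, ht⟩ h a = 1 :=
        mgσ_sum_one g η T ⟨t, ht⟩ h _ _ _
      rw [this, mul_one]
    rw [Finset.sum_congr rfl fun h _ => e1 h]
    exact ih (Nat.le_of_succ_le ht)

lemma mg_potential (g : ι → Set Θ) {η : ℝ} (hη0 : 0 ≤ η) (hη1 : η ≤ 1) {T : ℕ}
    (θc : ∀ t : Fin T, (Fin t.1 → A) → Θ)
    (r : ∀ t : Fin T, (Fin t.1 → A) → A → ℝ)
    (hr : ∀ t h j, r t h j ∈ Set.Icc (0 : ℝ) 1) :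
    ∀ (t : ℕ) (ht : t ≤ T),
      ∑ h : Fin t → A, mgπ (mgσ g η T) θc r t ht h *
          ∑ p : ι × A, Real.exp (η * mgS g θc r t ht h p) ≤
        (Fintype.card A * Fintype.card ι : ℝ) * (1 + η ^ 2) ^ t := by
  intro t
  induction t with
  | zero =>
    intro ht
    rw [Fintype.sum_unique]
    have : ∀ p : ι × A, mgS g θc r 0 ht (default : Fin 0 → A) p = 0 := by
      intro p; unfold mgS; exact Finset.sum_of_isEmpty _
    rw [Finset.sum_congr rfl fun p _ => by rw [this p, mul_zero, Real.exp_zero]]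
    rw [Finset.sum_const, Finset.card_univ, Fintype.card_prod]
    simp [mgπ, mul_comm]
  | succ t ih =>
    intro ht
    have ht' := Nat.le_of_succ_le ht
    rw [sum_pi_snoc]
    have step : ∀ h : Fin t → A,
        ∑ a : A, mgπ (mgσ g η T) θc r (t + 1) ht (Fin.snoc h a) *
          ∑ p : ι × A, Real.exp (η * mgS g θc r (t + 1) ht (Fin.snoc h a) p) ≤
        mgπ (mgσ g η T) θc r t ht' h *
          ((1 + η ^ 2) * ∑ p : ι × A, Real.exp (η * mgS g θc r t ht' h p)) := by
      intro h
      have e1 : ∀ a : A, mgπ (mgσ g η T) θc r (t + 1) ht (Fin.snoc h a) *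
          ∑ p : ι × A, Real.exp (η * mgS g θc r (t + 1) ht (Fin.snoc h a) p) =
          mgπ (mgσ g η T) θc r t ht' h *
            (contextualPlay (mgσ g η T) θc r ⟨t, ht⟩ h a *
              ∑ p : ι × A, Real.exp (η * (mgS g θc r t ht' h p +
                if θc ⟨t, ht⟩ h ∈ g p.1 then r ⟨t, ht⟩ h a - r ⟨t, ht⟩ h p.2 else 0))) := by
        intro a
        rw [mgπ_snoc (mgσ g η T) θc r t ht h a, mul_assoc]
        congr 1
        congr 1
        refine Finset.sum_congr rfl fun p _ => ?_
        rw [mgS_snoc g θc r t ht h a p]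
      rw [Finset.sum_congr rfl fun a _ => e1 a, ← Finset.mul_sum]
      refine mul_le_mul_of_nonneg_left ?_ (mgπ_nonneg g η θc r t ht' h)
      exact mg_round g hη0 hη1 T ⟨t, ht⟩ h _ _ _ (r ⟨t, ht⟩ h) (hr ⟨t, ht⟩ h)
    calc ∑ h : Fin t → A, ∑ a : A, mgπ (mgσ g η T) θc r (t + 1) ht (Fin.snoc h a) *
          ∑ p : ι × A, Real.exp (η * mgS g θc r (t + 1) ht (Fin.snoc h a) p)
        ≤ ∑ h : Fin t → A, mgπ (mgσ g η T) θc r t ht' h *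
            ((1 + η ^ 2) * ∑ p : ι × A, Real.exp (η * mgS g θc r t ht' h p)) :=
          Finset.sum_le_sum fun h _ => step h
      _ = (1 + η ^ 2) * ∑ h : Fin t → A, mgπ (mgσ g η T) θc r t ht' h *
            ∑ p : ι × A, Real.exp (η * mgS g θc r t ht' h p) := by
          rw [Finset.mul_sum]
          exact Finset.sum_congr rfl fun h _ => by ring
      _ ≤ (1 + η ^ 2) * ((Fintype.card A * Fintype.card ι : ℝ) * (1 + η ^ 2) ^ t) :=
          mul_le_mul_of_nonneg_left (ih ht') (by positivity)
      _ = (Fintype.card A * Fintype.card ι : ℝ) * (1 + η ^ 2) ^ (t + 1) := by ring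

end MG

set_option maxHeartbeats 1600000 in
/-- In the multi-group experts setting with group collection `G`
(indexed by `ι`, with `g i ⊆ Θ`) and `T ≥ ln(|A|·|G|)`, there exists an algorithm for the
Learner guaranteeing, against any adaptive Adversary, expected multi-group regret
`E[R^T_multi] ≤ 4√(T ln(|A|·|G|))`, where
`R^T_multi = max_{g∈G} max_{j∈A} Σ_{t : θ^t ∈ g} (r^t_{a^t} − r^t_j)`. -/
theorem multigroup_regret_bound
    (A : Type) [Fintype A] [Nonempty A] (Θ : Type)
    (ι : Type) [Fintype ι] [Nonempty ι] (g : ι → Set Θ) (T : ℕ)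
    (hT : Real.log ((Fintype.card A) * (Fintype.card ι)) ≤ T) :
    ∃ σ : ContextualStrategy A Θ T,
      (∀ t h pastθ θ past, (∀ j, 0 ≤ σ t h pastθ θ past j) ∧ ∑ j, σ t h pastθ θ past j = 1) ∧
      ∀ (θc : ∀ t : Fin T, (Fin t.1 → A) → Θ)
        (r : ∀ t : Fin T, (Fin t.1 → A) → A → ℝ),
        (∀ t h j, r t h j ∈ Set.Icc (0 : ℝ) 1) →
        ∑ a : Fin T → A, (∏ t, contextualPlay σ θc r t (transcriptPrefix a t) (a t)) *
            (⨆ p : ι × A, ∑ t, if θc t (transcriptPrefix a t) ∈ g p.1 then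
              r t (transcriptPrefix a t) (a t) - r t (transcriptPrefix a t) p.2 else 0) ≤
          4 * Real.sqrt (T * Real.log ((Fintype.card A) * (Fintype.card ι))) := by
  set L : ℝ := Real.log ((Fintype.card A) * (Fintype.card ι)) with hLdef
  have hN1 : (1 : ℝ) ≤ (Fintype.card A : ℝ) * (Fintype.card ι : ℝ) := by
    have h1 : (1 : ℕ) ≤ Fintype.card A * Fintype.card ι :=
      Nat.one_le_iff_ne_zero.2 (Nat.mul_ne_zero Fintype.card_ne_zero Fintype.card_ne_zero)
    exact_mod_cast h1
  have hL0 : 0 ≤ L := Real.log_nonneg hN1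
  set η : ℝ := Real.sqrt (L / T) with hηdef
  refine ⟨mgσ g η T, fun t h pastθ θ past =>
    ⟨mgσ_nonneg g η T t h pastθ θ past, mgσ_sum_one g η T t h pastθ θ past⟩, ?_⟩
  intro θc r hr
  have hπ_eq : ∀ a : Fin T → A,
      (∏ t, contextualPlay (mgσ g η T) θc r t (transcriptPrefix a t) (a t)) =
        mgπ (mgσ g η T) θc r T le_rfl a := fun a => rfl
  have hS_eq : ∀ (a : Fin T → A) (p : ι × A),
      (∑ t, if θc t (transcriptPrefix a t) ∈ g p.1 then
          r t (transcriptPrefix a t) (a t) - r t (transcriptPrefix a t) p.2 else 0) =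
        mgS g θc r T le_rfl a p := fun a p => rfl
  by_cases hLz : L = 0
  · -- degenerate case: |A| = |G| = 1
    have hprod : ((Fintype.card A : ℝ) * (Fintype.card ι : ℝ)) = 1 := by
      rcases Real.log_eq_zero.1 hLz with h | h | h
      · exfalso; rw [h] at hN1; linarith
      · exact h
      · exfalso; rw [h] at hN1; linarith
    have hNA : Fintype.card A = 1 := by
      have h1 : Fintype.card A * Fintype.card ι = 1 := by exact_mod_cast hprod
      have h2 : Fintype.card A ≤ Fintype.card A * Fintype.card ι :=
        Nat.le_mul_of_pos_right _ Fintype.card_pos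
      have h3 : 0 < Fintype.card A := Fintype.card_pos
      omega
    have hsub : ∀ a b : A, a = b := Fintype.card_le_one_iff.1 (le_of_eq hNA)
    have hzero : ∀ a : Fin T → A,
        (⨆ p : ι × A, ∑ t, if θc t (transcriptPrefix a t) ∈ g p.1 then
          r t (transcriptPrefix a t) (a t) - r t (transcriptPrefix a t) p.2 else 0) = 0 := by
      intro a
      have hterm : ∀ p : ι × A, (∑ t, if θc t (transcriptPrefix a t) ∈ g p.1 then
          r t (transcriptPrefix a t) (a t) - r t (transcriptPrefix a t) p.2 else 0) = 0 := by
        intro p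
        refine Finset.sum_eq_zero fun t _ => ?_
        rw [hsub (a t) p.2]
        split_ifs <;> simp
      calc (⨆ p : ι × A, ∑ t, if θc t (transcriptPrefix a t) ∈ g p.1 then
            r t (transcriptPrefix a t) (a t) - r t (transcriptPrefix a t) p.2 else 0)
          = ⨆ _ : ι × A, (0 : ℝ) := by rw [iSup_congr hterm]
        _ = 0 := ciSup_const
    have hlhs : ∑ a : Fin T → A,
        (∏ t, contextualPlay (mgσ g η T) θc r t (transcriptPrefix a t) (a t)) *
          (⨆ p : ι × A, ∑ t, if θc t (transcriptPrefix a t) ∈ g p.1 then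
            r t (transcriptPrefix a t) (a t) - r t (transcriptPrefix a t) p.2 else 0) = 0 := by
      refine Finset.sum_eq_zero fun a _ => ?_
      rw [hzero a, mul_zero]
    rw [hlhs, hLz, mul_zero, Real.sqrt_zero, mul_zero]
  · -- main case
    have hLpos : 0 < L := lt_of_le_of_ne hL0 (Ne.symm hLz)
    have hT0 : (0 : ℝ) < T := lt_of_lt_of_le hLpos hT
    have hη0 : 0 ≤ η := Real.sqrt_nonneg _
    have hηpos : 0 < η := Real.sqrt_pos.2 (div_pos hLpos hT0)
    have hη1 : η ≤ 1 := by
      rw [hηdef, show (1 : ℝ) = Real.sqrt 1 by rw [Real.sqrt_one]]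
      exact Real.sqrt_le_sqrt ((div_le_one hT0).2 hT)
    have hη2 : η ^ 2 = L / T := Real.sq_sqrt (le_of_lt (div_pos hLpos hT0))
    set Φ : (Fin T → A) → ℝ := fun a => ∑ p : ι × A, Real.exp (η * mgS g θc r T le_rfl a p)
      with hΦdef
    have hΦpos : ∀ a, 0 < Φ a :=
      fun a => Finset.sum_pos (fun p _ => Real.exp_pos _) Finset.univ_nonempty
    have hπ0 : ∀ a : Fin T → A, 0 ≤ mgπ (mgσ g η T) θc r T le_rfl a :=
      fun a => mgπ_nonneg g η θc r T le_rfl a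
    have hsum1 : ∑ a : Fin T → A, mgπ (mgσ g η T) θc r T le_rfl a = 1 :=
      mgπ_sum_one g η θc r T le_rfl
    have hsup : ∀ a : Fin T → A,
        (⨆ p : ι × A, ∑ t, if θc t (transcriptPrefix a t) ∈ g p.1 then
          r t (transcriptPrefix a t) (a t) - r t (transcriptPrefix a t) p.2 else 0) ≤
          η⁻¹ * Real.log (Φ a) := by
      intro a
      refine ciSup_le fun p => ?_
      rw [hS_eq a p]
      have h1 : Real.exp (η * mgS g θc r T le_rfl a p) ≤ Φ a :=
        Finset.single_le_sum (f := fun q : ι × A => Real.exp (η * mgS g θc r T le_rfl a q))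
          (fun q _ => (Real.exp_pos _).le) (Finset.mem_univ p)
      have h2 : η * mgS g θc r T le_rfl a p ≤ Real.log (Φ a) := by
        rw [← Real.log_exp (η * mgS g θc r T le_rfl a p)]
        exact Real.log_le_log (Real.exp_pos _) h1
      calc mgS g θc r T le_rfl a p = η⁻¹ * (η * mgS g θc r T le_rfl a p) := by
            rw [inv_mul_cancel_left₀ hηpos.ne']
        _ ≤ η⁻¹ * Real.log (Φ a) :=
            mul_le_mul_of_nonneg_left h2 (inv_nonneg.2 hη0)
    have hEΦpos : 0 < ∑ a : Fin T → A, mgπ (mgσ g η T) θc r T le_rfl a * Φ a := by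
      have hex : ∃ a : Fin T → A, 0 < mgπ (mgσ g η T) θc r T le_rfl a := by
        by_contra hcon
        push_neg at hcon
        have hz : ∑ a : Fin T → A, mgπ (mgσ g η T) θc r T le_rfl a = 0 :=
          Finset.sum_eq_zero fun a _ => le_antisymm (hcon a) (hπ0 a)
        rw [hsum1] at hz
        norm_num at hz
      obtain ⟨a0, ha0⟩ := hex
      exact Finset.sum_pos' (fun a _ => mul_nonneg (hπ0 a) (hΦpos a).le)
        ⟨a0, Finset.mem_univ _, mul_pos ha0 (hΦpos a0)⟩
    have hpot : ∑ a : Fin T → A, mgπ (mgσ g η T) θc r T le_rfl a * Φ a ≤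
        (Fintype.card A * Fintype.card ι : ℝ) * (1 + η ^ 2) ^ T :=
      mg_potential g hη0 hη1 θc r hr T le_rfl
    have hjensen : ∑ a : Fin T → A, mgπ (mgσ g η T) θc r T le_rfl a * Real.log (Φ a) ≤
        Real.log (∑ a : Fin T → A, mgπ (mgσ g η T) θc r T le_rfl a * Φ a) := by
      have := (strictConcaveOn_log_Ioi.concaveOn).le_map_sum
        (t := (Finset.univ : Finset (Fin T → A)))
        (w := fun a => mgπ (mgσ g η T) θc r T le_rfl a) (p := Φ)
        (fun a _ => hπ0 a) hsum1 (fun a _ => hΦpos a)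
      simpa [smul_eq_mul] using this
    have hlogpot : Real.log (∑ a : Fin T → A, mgπ (mgσ g η T) θc r T le_rfl a * Φ a) ≤
        L + L := by
      have h1 : Real.log (∑ a : Fin T → A, mgπ (mgσ g η T) θc r T le_rfl a * Φ a) ≤
          Real.log ((Fintype.card A * Fintype.card ι : ℝ) * (1 + η ^ 2) ^ T) :=
        Real.log_le_log hEΦpos hpot
      have h2 : Real.log ((Fintype.card A * Fintype.card ι : ℝ) * (1 + η ^ 2) ^ T) =
          L + T * Real.log (1 + η ^ 2) := by
        rw [Real.log_mul (by positivity) (by positivity), Real.log_pow]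
      have h3 : Real.log (1 + η ^ 2) ≤ η ^ 2 := by
        have := Real.log_le_sub_one_of_pos (show (0 : ℝ) < 1 + η ^ 2 by positivity)
        linarith
      have h4 : (T : ℝ) * Real.log (1 + η ^ 2) ≤ L := by
        calc (T : ℝ) * Real.log (1 + η ^ 2) ≤ T * (η ^ 2) :=
              mul_le_mul_of_nonneg_left h3 hT0.le
          _ = L := by rw [hη2]; field_simp
      linarith
    have hfinal : η⁻¹ * (L + L) ≤ 4 * Real.sqrt (T * L) := by
      have he : η = Real.sqrt L / Real.sqrt T := Real.sqrt_div hL0 T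
      have hsT : 0 < Real.sqrt T := Real.sqrt_pos.2 hT0
      have hsL : 0 < Real.sqrt L := Real.sqrt_pos.2 hLpos
      have hL' : Real.sqrt L * Real.sqrt L = L := Real.mul_self_sqrt hL0
      have hcalc : η⁻¹ * (L + L) = 2 * (Real.sqrt T * Real.sqrt L) := by
        rw [he, inv_div]
        rw [div_mul_eq_mul_div, div_eq_iff hsL.ne']
        nlinarith [hL']
      rw [hcalc, ← Real.sqrt_mul hT0.le]
      have := Real.sqrt_nonneg ((T : ℝ) * L)
      linarith
    calc ∑ a : Fin T → A,
          (∏ t, contextualPlay (mgσ g η T) θc r t (transcriptPrefix a t) (a t)) *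
            (⨆ p : ι × A, ∑ t, if θc t (transcriptPrefix a t) ∈ g p.1 then
              r t (transcriptPrefix a t) (a t) - r t (transcriptPrefix a t) p.2 else 0)
        ≤ ∑ a : Fin T → A, mgπ (mgσ g η T) θc r T le_rfl a * (η⁻¹ * Real.log (Φ a)) := by
          refine Finset.sum_le_sum fun a _ => ?_
          rw [hπ_eq a]
          exact mul_le_mul_of_nonneg_left (hsup a) (hπ0 a)
      _ = η⁻¹ * ∑ a : Fin T → A, mgπ (mgσ g η T) θc r T le_rfl a * Real.log (Φ a) := by
          rw [Finset.mul_sum]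
          exact Finset.sum_congr rfl fun a _ => by ring
      _ ≤ η⁻¹ * (L + L) := by
          refine mul_le_mul_of_nonneg_left ?_ (inv_nonneg.2 hη0)
          exact le_trans hjensen hlogpot
      _ ≤ 4 * Real.sqrt (T * L) := hfinal


end
end
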